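/- arXiv:math/0411514 — 15 statements merged into one kernel-verified Lean document; each statement's English description precedes it below -/
import Mathlib

section
/- Let A be a commutative Noetherian ring, X an arbitrary set, and R = A[X] the polynomial ring over A in the indeterminates X, on which the full symmetric group 𝔖_X of all permutations of X acts by permuting indeterminates. Then every 𝔖_X-invariant ideal I of R is finitely generated as an R[𝔖_X]-module; that is, there exists a finite set B ⊆ I such that I equals the ideal of R generated by {σb : σ ∈ 𝔖_X, b ∈ B}. -/
/-!
For finite `X` this is the Hilbert basis theorem. Otherwise everything reduces to `X = ℕ`: a
polynomial involves finitely many variables, which some permutation of `X` moves into a fixed copy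
of `ℕ` inside `X`, and permutations of that copy extend to `X`. Over `ℕ`, order monomials lexicographically with larger variables more significant; a
strictly increasing map of variables preserves this order and agrees with a permutation on the
finitely many variables of any given polynomial.

If an invariant ideal `I ⊆ A[ℕ]` were not generated by the orbits of finitely many elements, one
could choose `f₀, f₁, … ∈ I` with `fₙ` of minimal leading monomial outside the invariant ideal
`Jₙ` generated by the earlier ones; then `lc fₙ` is not the coefficient in degree `deg fₙ` of any
element of `Jₙ` of degree at most `deg fₙ`. By Higman's lemma the leading monomials contain an
infinite chain, each embedding into the next along a strictly increasing map of variables, and as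
`A` is Noetherian some leading coefficient of the chain lies in the ideal generated by the earlier
ones. Shifting the earlier members of the chain along those maps and multiplying by monomials
shows that this coefficient is one of the excluded ones after all.
-/

open MvPolynomial Finsupp Function Set
open scoped MonomialOrder

theorem exists_seq_of_forall_finite_exists {α : Type*} (P : α → Prop) (r : Set α → α → Prop)
    (h : ∀ s : Set α, s.Finite → (∀ x ∈ s, P x) → ∃ y, P y ∧ r s y) :
    ∃ f : ℕ → α, (∀ n, P (f n)) ∧ ∀ n, r (f '' Iio n) (f n) := by
  have : Nonempty α := let ⟨y, _⟩ := h ∅ finite_empty (by simp); ⟨y⟩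
  choose! next hnext using h
  let F : ℕ → Set α := fun n => Nat.rec ∅ (fun _ s => insert (next s) s) n
  have hF : ∀ n, F n = (fun k => next (F k)) '' Iio n := by
    intro n
    induction n with
    | zero => simp [F]
    | succ n ih =>
      rw [← Order.succ_eq_add_one, Order.Iio_succ_eq_insert, image_insert_eq, ← ih]
      rfl
  have hspec : ∀ n, P (next (F n)) ∧ r (F n) (next (F n)) := by
    intro n
    induction n using Nat.strong_induction_on with
    | _ n ih =>
      refine hnext _ (hF n ▸ (finite_Iio n).image _) ?_
      rw [hF n]
      rintro _ ⟨k, hk, rfl⟩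
      exact (ih k hk).1
  exact ⟨fun n => next (F n), fun n => (hspec n).1, fun n => hF n ▸ (hspec n).2⟩

theorem exists_mem_span_image_Iio {R : Type*} [Semiring R] [IsNoetherianRing R] (c : ℕ → R) :
    ∃ n, c n ∈ Ideal.span (c '' Iio n) := by
  obtain ⟨n, hn⟩ := monotone_stabilizes_iff_noetherian.2 ‹_›
    ⟨fun n => Ideal.span (c '' Iio n), fun _ _ h => Ideal.span_mono (image_mono (Iio_subset_Iio h))⟩
  exact ⟨n, (hn (n + 1) n.le_succ).ge (Ideal.subset_span ⟨n, n.lt_succ_self, rfl⟩)⟩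

theorem Equiv.Perm.exists_extend_of_finset {X : Type*} [Infinite X] (s : Finset X) {f : s → X}
    (hf : Injective f) : ∃ τ : Equiv.Perm X, ∀ x : s, τ x = f x :=
  Cardinal.extend_function_of_lt (s := (s : Set X)) ⟨f, hf⟩
    ((Cardinal.lt_aleph0_iff_set_finite.2 s.finite_toSet).trans_le (Cardinal.aleph0_le_mk X))
    ⟨Equiv.refl X⟩

def EmbedsLE (u v : ℕ →₀ ℕ) : Prop := ∃ π : ℕ → ℕ, StrictMono π ∧ ∀ i, u i ≤ v (π i)

theorem EmbedsLE.refl (u : ℕ →₀ ℕ) : EmbedsLE u u := ⟨id, strictMono_id, fun _ => le_rfl⟩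

theorem EmbedsLE.trans {u v w : ℕ →₀ ℕ} (huv : EmbedsLE u v) (hvw : EmbedsLE v w) :
    EmbedsLE u w := by
  obtain ⟨π, hπ, huv⟩ := huv
  obtain ⟨π', hπ', hvw⟩ := hvw
  exact ⟨π' ∘ π, hπ'.comp hπ, fun i => (huv i).trans (hvw (π i))⟩

instance : IsPreorder (ℕ →₀ ℕ) EmbedsLE where
  refl := EmbedsLE.refl
  trans _ _ _ := EmbedsLE.trans

theorem Finsupp.mapDomain_le_of_forall_le {α β : Type*} {u : α →₀ ℕ} {v : β →₀ ℕ} {π : α → β}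
    (hπ : Injective π) (h : ∀ i, u i ≤ v (π i)) : u.mapDomain π ≤ v := by
  intro i
  by_cases hi : i ∈ range π
  · obtain ⟨k, rfl⟩ := hi
    simpa [mapDomain_apply hπ] using h k
  · simp [mapDomain_of_notMem_range _ _ hi]

theorem embedsLE_toFinsupp_of_sublistForall₂ {l₁ l₂ : List ℕ}
    (h : List.SublistForall₂ (· ≤ ·) l₁ l₂) : EmbedsLE l₁.toFinsupp l₂.toFinsupp := by
  induction h with
  | nil => exact ⟨id, strictMono_id, fun i => by simp [List.toFinsupp_apply]⟩
  | cons hab _ ih =>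
    obtain ⟨π, hπ, hle⟩ := ih
    refine ⟨fun | 0 => 0 | i + 1 => π i + 1, strictMono_nat_of_lt_succ fun i => ?_, fun i => ?_⟩
    · cases i with
      | zero => exact Nat.succ_pos _
      | succ i => exact Nat.succ_lt_succ (hπ i.lt_succ_self)
    · cases i with
      | zero => simpa [List.toFinsupp_apply] using hab
      | succ i => simpa [List.toFinsupp_apply] using hle i
  | cons_right _ ih =>
    obtain ⟨π, hπ, hle⟩ := ih
    exact ⟨fun i => π i + 1, fun i j hij => Nat.succ_lt_succ (hπ hij),
      fun i => by simpa [List.toFinsupp_apply] using hle i⟩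

theorem exists_list_toFinsupp_eq (u : ℕ →₀ ℕ) : ∃ l : List ℕ, l.toFinsupp = u := by
  refine ⟨(List.range (u.support.sup id + 1)).map u, Finsupp.ext fun i => ?_⟩
  rw [List.toFinsupp_apply]
  rcases lt_or_ge i (u.support.sup id + 1) with hi | hi
  · simp [List.getD_eq_getElem?_getD, hi]
  · rw [List.getD_eq_default _ _ (by simpa using hi), eq_comm, ← Finsupp.notMem_support_iff]
    intro hmem
    have := Finset.le_sup (f := id) hmem
    simp only [id] at this
    omega

theorem wellQuasiOrdered_embedsLE : WellQuasiOrdered EmbedsLE := by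
  intro u
  choose l hl using fun n => exists_list_toFinsupp_eq (u n)
  obtain ⟨m, n, hmn, h⟩ :=
    (IsPWO.of_linearOrder (univ : Set ℕ)).partiallyWellOrderedOn_sublistForall₂ (· ≤ ·)
      (fun n => ⟨l n, fun _ _ => trivial⟩)
  exact ⟨m, n, hmn, hl m ▸ hl n ▸ embedsLE_toFinsupp_of_sublistForall₂ h⟩

namespace MonomialOrder

variable {σ τ : Type*}

section CommSemiring

variable {R : Type*} [CommSemiring R]

def leadingCoeffIdeal (m : MonomialOrder σ) (J : Ideal (MvPolynomial σ R)) (d : σ →₀ ℕ) :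
    Ideal R where
  carrier := {a | ∃ p ∈ J, m.degree p ≼[m] d ∧ p.coeff d = a}
  add_mem' := by
    rintro _ _ ⟨p, hp, hpd, rfl⟩ ⟨q, hq, hqd, rfl⟩
    exact ⟨p + q, J.add_mem hp hq, degree_add_le.trans (max_le hpd hqd), coeff_add _ _ _⟩
  zero_mem' := ⟨0, J.zero_mem, by simp, coeff_zero _⟩
  smul_mem' := by
    rintro a _ ⟨p, hp, hpd, rfl⟩
    exact ⟨a • p, J.smul_of_tower_mem a hp, degree_smul_le.trans hpd, coeff_smul _ _ _⟩

variable {m : MonomialOrder σ}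

theorem eq_zero_or_degree_lt_of_coeff_eq_zero {f : MvPolynomial σ R} {d : σ →₀ ℕ}
    (hf : m.degree f ≼[m] d) (h0 : f.coeff d = 0) : f = 0 ∨ m.degree f ≺[m] d := by
  refine or_iff_not_imp_left.2 fun hf0 => lt_of_le_of_ne hf fun heq => ?_
  exact m.coeff_degree_ne_zero_iff.2 hf0 (m.toSyn.injective heq ▸ h0)

theorem degree_rename {m' : MonomialOrder τ} {π : σ → τ} (hπ : Injective π)
    (hm : ∀ u v, u ≺[m] v → u.mapDomain π ≺[m'] v.mapDomain π) (f : MvPolynomial σ R) :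
    m'.degree (rename π f) = (m.degree f).mapDomain π := by
  classical
  have hmono : ∀ u v, u ≼[m] v → u.mapDomain π ≼[m'] v.mapDomain π := fun u v huv =>
    (huv.lt_or_eq).elim (fun h => (hm u v h).le) fun h => (m.toSyn.injective h) ▸ le_rfl
  apply m'.toSyn.injective
  refine le_antisymm (m'.degree_le_iff.2 ?_) ?_
  · rw [support_rename_of_injective hπ]
    rintro _ hc
    obtain ⟨u, hu, rfl⟩ := Finset.mem_image.1 hc
    exact hmono _ _ (m.le_degree hu)
  · by_cases hf : f = 0
    · simp [hf]
    refine m'.le_degree ?_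
    rw [MvPolynomial.mem_support_iff, coeff_rename_mapDomain _ hπ]
    exact m.coeff_degree_ne_zero_iff.2 hf

theorem leadingCoeff_rename {m' : MonomialOrder τ} {π : σ → τ} (hπ : Injective π)
    (hm : ∀ u v, u ≺[m] v → u.mapDomain π ≺[m'] v.mapDomain π) (f : MvPolynomial σ R) :
    m'.leadingCoeff (rename π f) = m.leadingCoeff f := by
  rw [leadingCoeff, degree_rename hπ hm, coeff_rename_mapDomain _ hπ, leadingCoeff]

end CommSemiring

theorem exists_leadingCoeff_notMem_leadingCoeffIdeal {R : Type*} [CommRing R]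
    {m : MonomialOrder σ} {I J : Ideal (MvPolynomial σ R)} (h : J < I) :
    ∃ f ∈ I, m.leadingCoeff f ∉ m.leadingCoeffIdeal J (m.degree f) := by
  obtain ⟨f, ⟨hfI, hfJ⟩, hmin⟩ :=
    (InvImage.wf (fun p => m.toSyn (m.degree p)) wellFounded_lt).has_min
      ((I : Set (MvPolynomial σ R)) \ J) (exists_of_ssubset h)
  refine ⟨f, hfI, fun ⟨p, hpJ, hpd, hpc⟩ => ?_⟩
  rcases eq_zero_or_degree_lt_of_coeff_eq_zero (f := f - p)
    (degree_sub_le.trans (max_le le_rfl hpd)) (by simp [hpc, leadingCoeff]) with h0 | hlt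
  · exact hfJ (sub_eq_zero.1 h0 ▸ hpJ)
  · exact hmin (f - p)
      ⟨I.sub_mem hfI (h.le hpJ), fun h' => hfJ (by simpa using J.add_mem h' hpJ)⟩ hlt

/-- Lexicographic order with variables of larger index more significant, so `X 0 < X 1 < ⋯`;
reversing `ℕ` is what makes lex a well-order on monomials. -/
noncomputable def lexDual : MonomialOrder ℕ := MonomialOrder.lex (σ := ℕᵒᵈ)

theorem lexDual_lt_iff {u v : ℕ →₀ ℕ} :
    u ≺[lexDual] v ↔ ∃ i, (∀ j, i < j → u j = v j) ∧ u i < v i := Iff.rfl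

theorem lexDual_mapDomain_lt {π : ℕ → ℕ} (hπ : StrictMono π) {u v : ℕ →₀ ℕ}
    (h : u ≺[lexDual] v) : u.mapDomain π ≺[lexDual] v.mapDomain π := by
  obtain ⟨i, hi, hlt⟩ := lexDual_lt_iff.1 h
  refine lexDual_lt_iff.2 ⟨π i, fun j hj => ?_, by simpa [mapDomain_apply hπ.injective] using hlt⟩
  by_cases hj' : j ∈ range π
  · obtain ⟨k, rfl⟩ := hj'
    simp [mapDomain_apply hπ.injective, hi k (hπ.lt_iff_lt.1 hj)]
  · simp [mapDomain_of_notMem_range _ _ hj']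

end MonomialOrder

namespace MvPolynomial

variable {X Y : Type*}

section CommSemiring

variable {A : Type*} [CommSemiring A]

noncomputable def permSpan (B : Set (MvPolynomial X A)) : Ideal (MvPolynomial X A) :=
  Ideal.span {p | ∃ σ : Equiv.Perm X, ∃ b ∈ B, p = rename (⇑σ) b}

def IsPermInvariant (I : Ideal (MvPolynomial X A)) : Prop :=
  ∀ σ : Equiv.Perm X, ∀ f ∈ I, rename (⇑σ) f ∈ I

def IsPermFG (I : Ideal (MvPolynomial X A)) : Prop :=
  ∃ B : Finset (MvPolynomial X A), permSpan (B : Set (MvPolynomial X A)) = I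

theorem subset_permSpan (B : Set (MvPolynomial X A)) : B ⊆ permSpan B :=
  fun b hb => Ideal.subset_span ⟨1, b, hb, by simp⟩

theorem permSpan_le {I : Ideal (MvPolynomial X A)} (hI : IsPermInvariant I)
    {B : Set (MvPolynomial X A)} (hB : B ⊆ I) : permSpan B ≤ I :=
  Ideal.span_le.2 fun _ ⟨σ, b, hb, hp⟩ => hp ▸ hI σ b (hB hb)

theorem isPermInvariant_permSpan (B : Set (MvPolynomial X A)) : IsPermInvariant (permSpan B) := by
  intro τ p hp
  refine (Ideal.map_le_iff_le_comap.2 ?_ : Ideal.map (rename τ) (permSpan B) ≤ permSpan B)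
    (Ideal.mem_map_of_mem _ hp)
  refine Ideal.span_le.2 fun _ ⟨σ, b, hb, hp⟩ => Ideal.subset_span ⟨τ * σ, b, hb, ?_⟩
  simp [hp, rename_rename]

theorem rename_mem_permSpan_image {j : X → Y}
    (hj : ∀ σ : Equiv.Perm X, ∃ τ : Equiv.Perm Y, j ∘ σ = τ ∘ j) {B : Set (MvPolynomial X A)}
    {p : MvPolynomial X A} (hp : p ∈ permSpan B) : rename j p ∈ permSpan (rename j '' B) := by
  refine (Ideal.map_le_iff_le_comap.2 ?_ : Ideal.map (rename j) (permSpan B) ≤ _)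
    (Ideal.mem_map_of_mem _ hp)
  refine Ideal.span_le.2 fun _ ⟨σ, b, hb, hp⟩ => ?_
  obtain ⟨τ, hτ⟩ := hj σ
  exact Ideal.subset_span ⟨τ, rename j b, mem_image_of_mem _ hb, by simp [hp, rename_rename, hτ]⟩

theorem IsPermInvariant.comap {I : Ideal (MvPolynomial Y A)} (hI : IsPermInvariant I) {j : X → Y}
    (hj : ∀ σ : Equiv.Perm X, ∃ τ : Equiv.Perm Y, j ∘ σ = τ ∘ j) :
    IsPermInvariant (I.comap (rename j)) := by
  intro σ p hp
  obtain ⟨τ, hτ⟩ := hj σ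
  rw [Ideal.mem_comap] at hp ⊢
  rw [rename_rename, hτ, ← rename_rename]
  exact hI τ _ hp

theorem exists_perm_rename_eq [Infinite X] {s : Finset X} (q : MvPolynomial s A) {f : s → X}
    (hf : Injective f) : ∃ τ : Equiv.Perm X, rename τ (rename (↑) q) = rename f q := by
  obtain ⟨τ, hτ⟩ := Equiv.Perm.exists_extend_of_finset s hf
  exact ⟨τ, by rw [rename_rename]; exact congrArg (rename · q) (_root_.funext hτ)⟩

theorem IsPermInvariant.rename_mem [Infinite X] {I : Ideal (MvPolynomial X A)}
    (hI : IsPermInvariant I) {π : X → X} (hπ : Injective π) {p : MvPolynomial X A} (hp : p ∈ I) :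
    rename π p ∈ I := by
  obtain ⟨s, q, rfl⟩ := exists_finset_rename p
  obtain ⟨τ, hτ⟩ := exists_perm_rename_eq q (hπ.comp Subtype.val_injective)
  rw [rename_rename, ← hτ]
  exact hI τ _ hp

theorem IsPermInvariant.isPermFG_of_fg {I : Ideal (MvPolynomial X A)} (hI : IsPermInvariant I)
    (h : I.FG) : IsPermFG I := by
  obtain ⟨B, rfl⟩ := h
  exact ⟨B, le_antisymm (permSpan_le hI Ideal.subset_span) (Ideal.span_le.2 (subset_permSpan _))⟩

end CommSemiring

open MonomialOrder

section CommRing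

variable {A : Type*} [CommRing A]

theorem leadingCoeff_mem_leadingCoeffIdeal_of_embedsLE {J : Ideal (MvPolynomial ℕ A)}
    (hJ : IsPermInvariant J) {g : MvPolynomial ℕ A} (hg : g ∈ J) {d : ℕ →₀ ℕ}
    (hd : EmbedsLE (lexDual.degree g) d) :
    lexDual.leadingCoeff g ∈ lexDual.leadingCoeffIdeal J d := by
  obtain ⟨π, hπ, hle⟩ := hd
  have hdeg := degree_rename hπ.injective (fun _ _ => lexDual_mapDomain_lt hπ) g
  set D := (lexDual.degree g).mapDomain π
  have hD : D ≤ d := mapDomain_le_of_forall_le hπ.injective hle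
  refine ⟨monomial (d - D) 1 * rename π g,
    J.mul_mem_left _ (hJ.rename_mem hπ.injective hg), ?_, ?_⟩
  · calc lexDual.toSyn (lexDual.degree (monomial (d - D) 1 * rename π g))
        ≤ lexDual.toSyn (d - D) + lexDual.toSyn D := by
          rw [← hdeg, ← map_add]
          exact degree_mul_le.trans (by rw [map_add, map_add]; gcongr; exact degree_monomial_le 1)
      _ = lexDual.toSyn d := by rw [← map_add, tsub_add_cancel_of_le hD]
  · have hcoeff := coeff_mul_of_add_of_degree_le (degree_monomial_le (d := d - D) (1 : A))
      (congrArg lexDual.toSyn hdeg).le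
    rw [tsub_add_cancel_of_le hD] at hcoeff
    rw [hcoeff, coeff_monomial, if_pos rfl, one_mul, ← hdeg]
    exact leadingCoeff_rename hπ.injective (fun _ _ => lexDual_mapDomain_lt hπ) g

theorem IsPermInvariant.isPermFG_nat [IsNoetherianRing A] {I : Ideal (MvPolynomial ℕ A)}
    (hI : IsPermInvariant I) : IsPermFG I := by
  by_contra hfg
  have hlt : ∀ s : Set (MvPolynomial ℕ A), s.Finite → s ⊆ I → permSpan s < I := fun s hs hsI =>
    lt_of_le_of_ne (permSpan_le hI hsI) fun h => hfg ⟨hs.toFinset, by rw [hs.coe_toFinset, h]⟩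
  obtain ⟨f, hfI, hbad⟩ := exists_seq_of_forall_finite_exists (· ∈ I)
    (fun s g => lexDual.leadingCoeff g ∉ lexDual.leadingCoeffIdeal (permSpan s) (lexDual.degree g))
    fun s hs hsI => exists_leadingCoeff_notMem_leadingCoeffIdeal (hlt s hs hsI)
  obtain ⟨φ, hφ⟩ := wellQuasiOrdered_embedsLE.exists_monotone_subseq fun n => lexDual.degree (f n)
  obtain ⟨N, hN⟩ := exists_mem_span_image_Iio fun k => lexDual.leadingCoeff (f (φ k))
  refine hbad (φ N) (Ideal.span_le.2 ?_ hN)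
  rintro _ ⟨k, hk, rfl⟩
  exact leadingCoeff_mem_leadingCoeffIdeal_of_embedsLE (isPermInvariant_permSpan _)
    (subset_permSpan _ (mem_image_of_mem f (mem_Iio.2 (φ.strictMono hk)))) (hφ k N hk.le)

theorem IsPermInvariant.isPermFG [IsNoetherianRing A] {I : Ideal (MvPolynomial X A)}
    (hI : IsPermInvariant I) : IsPermFG I := by
  rcases finite_or_infinite X with hX | hX
  · exact hI.isPermFG_of_fg (IsNoetherian.noetherian I)
  classical
  let j := Infinite.natEmbedding X
  have hj : ∀ σ : Equiv.Perm ℕ, ∃ τ : Equiv.Perm X, j ∘ σ = τ ∘ j := fun σ =>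
    ⟨σ.extendDomain (Equiv.ofInjective j j.injective), _root_.funext fun n =>
      (σ.extendDomain_apply_image (Equiv.ofInjective j j.injective) n).symm⟩
  obtain ⟨B, hB⟩ := (hI.comap hj).isPermFG_nat
  refine ⟨B.image (rename j), le_antisymm (permSpan_le hI ?_) fun f hf => ?_⟩
  · rw [Finset.coe_image, image_subset_iff]
    exact fun b hb => hB.le (subset_permSpan _ hb)
  obtain ⟨s, q, rfl⟩ := exists_finset_rename f
  obtain ⟨e, he⟩ := Countable.exists_injective_nat s
  obtain ⟨τ, hτ⟩ := exists_perm_rename_eq q (j.injective.comp he)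
  have hq : rename e q ∈ permSpan (B : Set (MvPolynomial ℕ A)) := by
    rw [hB, Ideal.mem_comap, rename_rename, ← hτ]
    exact hI τ _ hf
  have := isPermInvariant_permSpan _ τ⁻¹ _ (rename_mem_permSpan_image hj hq)
  simpa [rename_rename, ← hτ, ← Function.comp_assoc] using this

end CommRing

end MvPolynomial

/-- Let `A` be a commutative Noetherian ring, `X` an arbitrary set and
`R = A[X]` the polynomial ring, on which the full symmetric group of `X` acts by
permuting indeterminates.  Every invariant ideal `I` of `R` is finitely generated as an
`R[𝔖_X]`-module: there is a finite `B ⊆ I` with `I = ⟨σb : σ ∈ 𝔖_X, b ∈ B⟩_R`. -/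
theorem stmt0 {A : Type*} [CommRing A] [IsNoetherianRing A] {X : Type*}
    (I : Ideal (MvPolynomial X A))
    (hI : ∀ σ : Equiv.Perm X, ∀ f ∈ I, MvPolynomial.rename (⇑σ) f ∈ I) :
    ∃ B : Finset (MvPolynomial X A), ↑B ⊆ (I : Set (MvPolynomial X A)) ∧
      I = Ideal.span {p : MvPolynomial X A |
        ∃ σ : Equiv.Perm X, ∃ b ∈ B, p = MvPolynomial.rename (⇑σ) b} := by
  obtain ⟨B, hB⟩ := MvPolynomial.IsPermInvariant.isPermFG hI
  exact ⟨B, hB ▸ MvPolynomial.subset_permSpan _, hB.symm⟩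
end

section
/- Let A be a commutative Noetherian ring, X a set, R = A[X], and G a group of permutations of X. If the monoid X^⋄ of monomials admits a term ordering that is lovely for G, then every G-invariant ideal I of R is finitely generated as an R[G]-module; that is, there exists a finite set B ⊆ I such that I equals the ideal of R generated by {σb : σ ∈ G, b ∈ B}. -/
/-!
Suppose `I` is not generated by the `G`-orbit of any finite subset. Then one can choose
`f₀, f₁, …` in `I`, each outside the ideal generated by the orbits of the previous ones and with
a leading monomial that is minimal for this property. Since the symmetric cancellation ordering
is a wqo, a subsequence has ⪯-increasing leading monomials, and since `A` is Noetherian some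
leading coefficient of the subsequence is an `A`-combination of the earlier ones. The defining
property of `⪯` provides `σ ∈ G` and monomials `u` such that subtracting the corresponding
combination of the `X^u · σ fₖ` cancels the leading term without creating larger monomials: this
produces an element of `I` outside the same ideal with a smaller leading monomial.
-/

/-- A quasi-ordering (here: any binary relation) `r` on `S` is a well-quasi-ordering if
every infinite sequence is good, i.e. there are `i < j` with `r (f i) (f j)`. -/
def IsWQO {S : Type*} (r : S → S → Prop) : Prop :=
  ∀ f : ℕ → S, ∃ i j : ℕ, i < j ∧ r (f i) (f j)

/-- A term ordering of the monoid of monomials `X →₀ ℕ`: a linear order which is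
well-founded, with `1 ≤ x` for every indeterminate `x`, and compatible with
multiplication by indeterminates. -/
def IsTermOrder {X : Type*} (r : (X →₀ ℕ) → (X →₀ ℕ) → Prop) : Prop :=
  IsLinearOrder (X →₀ ℕ) r ∧
  WellFounded (fun v w : X →₀ ℕ => r v w ∧ v ≠ w) ∧
  (∀ x : X, r 0 (Finsupp.single x 1)) ∧
  (∀ (v w : X →₀ ℕ) (x : X), r v w → r (Finsupp.single x 1 + v) (Finsupp.single x 1 + w))

/-- The symmetric cancellation ordering corresponding to a permutation group `G` on `X`
and a term ordering `r` of the monomials `X →₀ ℕ`:  `v ⪯ w` iff `r v w` and there are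
`σ ∈ G` and a monomial `u` with `w = u·σv` and `u·σv' ≤ w` for every `v' ≤ v`. -/
def SymCancel {X : Type*} (G : Subgroup (Equiv.Perm X))
    (r : (X →₀ ℕ) → (X →₀ ℕ) → Prop) (v w : X →₀ ℕ) : Prop :=
  r v w ∧ ∃ σ : Equiv.Perm X, σ ∈ G ∧ ∃ u : X →₀ ℕ,
    w = u + Finsupp.mapDomain (⇑σ) v ∧
    ∀ v' : X →₀ ℕ, r v' v → r (u + Finsupp.mapDomain (⇑σ) v') w

/-- The lexicographic ordering of monomials induced by a linear order on `X`:
`v ≤lex w` iff `v = w` or there is `x` with `v x < w x` and `v y = w y` for all `y > x`. -/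
def LexLe {X : Type*} [LinearOrder X] (v w : X →₀ ℕ) : Prop :=
  v = w ∨ ∃ x : X, v x < w x ∧ ∀ y : X, x < y → v y = w y

open MvPolynomial

theorem Finset.exists_mem_forall_rel_of_total {α : Type*} {r : α → α → Prop} [IsTrans α r]
    [Std.Total r] {s : Finset α} (hs : s.Nonempty) : ∃ m ∈ s, ∀ v ∈ s, r v m := by
  have : Nonempty s := hs.coe_sort
  have hdir : Directed r ((↑) : s → α) := fun a b => (total_of r a b).elim
    (fun h => ⟨b, h, refl_of r _⟩) (fun h => ⟨a, refl_of r _, h⟩)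
  obtain ⟨m, hm⟩ := hdir.finset_le s.attach
  exact ⟨m, m.2, fun v hv => hm ⟨v, hv⟩ (mem_attach s _)⟩

theorem IsNoetherian.exists_mem_span_image_Iio {R M : Type*} [Semiring R] [AddCommMonoid M]
    [Module R M] [IsNoetherian R M] (v : ℕ → M) :
    ∃ n, v n ∈ Submodule.span R (v '' Set.Iio n) := by
  obtain ⟨n, hn⟩ := monotone_stabilizes_iff_noetherian.mpr ‹_›
    ⟨fun n => Submodule.span R (v '' Set.Iio n),
      fun _ _ hab => Submodule.span_mono (Set.image_mono (Set.Iio_subset_Iio hab))⟩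
  have hmem : v n ∈ Submodule.span R (v '' Set.Iio (n + 1)) :=
    Submodule.subset_span ⟨n, n.lt_succ_self, rfl⟩
  exact ⟨n, (congrArg (v n ∈ ·) (hn (n + 1) n.le_succ)).mpr hmem⟩

section SymCancel

variable {X : Type*} {G : Subgroup (Equiv.Perm X)} {r : (X →₀ ℕ) → (X →₀ ℕ) → Prop}

theorem symCancel_refl [Std.Refl r] (v : X →₀ ℕ) : SymCancel G r v v :=
  ⟨refl_of r v, 1, G.one_mem, 0, by simp, fun v' hv' => by simpa using hv'⟩

theorem symCancel_trans [IsTrans _ r] {a b c : X →₀ ℕ} (hab : SymCancel G r a b)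
    (hbc : SymCancel G r b c) : SymCancel G r a c := by
  obtain ⟨hab, σ, hσ, u, rfl, hu⟩ := hab
  obtain ⟨hbc, τ, hτ, u', rfl, hu'⟩ := hbc
  refine ⟨_root_.trans hab hbc, τ * σ, G.mul_mem hτ hσ, u' + Finsupp.mapDomain τ u, ?_,
    fun v' hv' => ?_⟩
  · simp only [add_assoc, Equiv.Perm.coe_mul, Finsupp.mapDomain_comp, Finsupp.mapDomain_add]
  · simpa only [add_assoc, Equiv.Perm.coe_mul, Finsupp.mapDomain_comp, Finsupp.mapDomain_add]
      using hu' _ (hu v' hv')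

instance [IsPreorder _ r] : IsPreorder _ (SymCancel G r) where
  refl := symCancel_refl
  trans _ _ _ := symCancel_trans

end SymCancel

namespace MvPolynomial

variable {X Y A : Type*}

section LeadingTerm

variable [CommSemiring A] (r : (X →₀ ℕ) → (X →₀ ℕ) → Prop) [IsTrans _ r] [Std.Total r]

/-- Junk value `0` for the zero polynomial. -/
noncomputable def leadingMonomial (f : MvPolynomial X A) : X →₀ ℕ :=
  if h : f.support.Nonempty then (Finset.exists_mem_forall_rel_of_total (r := r) h).choose else 0

noncomputable def leadingCoeff (f : MvPolynomial X A) : A :=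
  coeff (leadingMonomial r f) f

def IsMinimalInDiff (I J : Ideal (MvPolynomial X A)) (g : MvPolynomial X A) : Prop :=
  g ∈ I ∧ g ∉ J ∧ ∀ h ∈ I, h ∉ J →
    ¬(r (leadingMonomial r h) (leadingMonomial r g) ∧ leadingMonomial r h ≠ leadingMonomial r g)

variable {r}

theorem leadingMonomial_mem_support {f : MvPolynomial X A} (hf : f ≠ 0) :
    leadingMonomial r f ∈ f.support := by
  have hne : f.support.Nonempty := Finset.nonempty_iff_ne_empty.2 (support_eq_empty.not.2 hf)
  rw [leadingMonomial, dif_pos hne]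
  exact (Finset.exists_mem_forall_rel_of_total hne).choose_spec.1

theorem rel_leadingMonomial {f : MvPolynomial X A} {m : X →₀ ℕ} (hm : m ∈ f.support) :
    r m (leadingMonomial r f) := by
  have hne : f.support.Nonempty := ⟨m, hm⟩
  rw [leadingMonomial, dif_pos hne]
  exact (Finset.exists_mem_forall_rel_of_total hne).choose_spec.2 m hm

theorem leadingMonomial_lt_of_mem_restrictSupport {f : MvPolynomial X A} {w : X →₀ ℕ}
    (hf : f ∈ restrictSupport A {m | r m w}) (hw : coeff w f = 0) (hf0 : f ≠ 0) :
    r (leadingMonomial r f) w ∧ leadingMonomial r f ≠ w := by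
  have hmem := leadingMonomial_mem_support (r := r) hf0
  refine ⟨hf hmem, fun h => ?_⟩
  rw [h, mem_support_iff] at hmem
  exact hmem hw

end LeadingTerm

theorem monomial_mul_rename_mem_restrictSupport [CommSemiring A] {s : Set (Y →₀ ℕ)}
    {g : MvPolynomial X A} {σ : X → Y} {u : Y →₀ ℕ}
    (h : ∀ v ∈ g.support, u + Finsupp.mapDomain σ v ∈ s) :
    monomial u 1 * rename σ g ∈ restrictSupport A s := by
  classical
  rw [mem_restrictSupport_iff]
  intro m hm
  rw [Finset.mem_coe, mem_support_iff, coeff_monomial_mul'] at hm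
  split_ifs at hm with hum
  · rw [one_mul] at hm
    obtain ⟨v, hv, hvg⟩ := coeff_rename_ne_zero σ g _ hm
    rw [← add_tsub_cancel_of_le hum, ← hv]
    exact h v (mem_support_iff.2 hvg)
  · exact (hm rfl).elim

theorem coeff_add_mapDomain_monomial_mul_rename [CommSemiring A] {σ : X → Y}
    (hσ : σ.Injective) (u : Y →₀ ℕ) (v : X →₀ ℕ) (g : MvPolynomial X A) :
    coeff (u + Finsupp.mapDomain σ v) (monomial u 1 * rename σ g) = coeff v g := by
  rw [coeff_monomial_mul, one_mul, coeff_rename_mapDomain _ hσ]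

noncomputable def orbitSpan [CommSemiring A] (G : Subgroup (Equiv.Perm X))
    (s : Set (MvPolynomial X A)) : Ideal (MvPolynomial X A) :=
  Ideal.span {p | ∃ σ ∈ G, ∃ b ∈ s, p = rename σ b}

section OrbitSpan

variable [CommSemiring A] {G : Subgroup (Equiv.Perm X)} {s t : Set (MvPolynomial X A)}

theorem rename_mem_orbitSpan {σ : Equiv.Perm X} (hσ : σ ∈ G) {b : MvPolynomial X A}
    (hb : b ∈ s) : rename σ b ∈ orbitSpan G s :=
  Ideal.subset_span ⟨σ, hσ, b, hb, rfl⟩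

theorem orbitSpan_mono (h : s ⊆ t) : orbitSpan G s ≤ orbitSpan G t :=
  Ideal.span_mono fun _ ⟨σ, hσ, b, hb, hp⟩ => ⟨σ, hσ, b, h hb, hp⟩

theorem orbitSpan_le {I : Ideal (MvPolynomial X A)}
    (hI : ∀ σ ∈ G, ∀ f ∈ I, rename σ f ∈ I) (hs : s ⊆ I) : orbitSpan G s ≤ I :=
  Ideal.span_le.2 fun _ ⟨σ, hσ, b, hb, hp⟩ => hp ▸ hI σ hσ b (hs hb)

end OrbitSpan

section Reduction

variable {G : Subgroup (Equiv.Perm X)} {r : (X →₀ ℕ) → (X →₀ ℕ) → Prop} [IsTrans _ r]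
  [Std.Total r]

theorem exists_mem_orbitSpan_coeff_eq [CommSemiring A] {s : Set (MvPolynomial X A)}
    {w : X →₀ ℕ} (hs : ∀ g ∈ s, SymCancel G r (leadingMonomial r g) w) {a : A}
    (ha : a ∈ Ideal.span (leadingCoeff r '' s)) :
    ∃ p ∈ orbitSpan G s, p ∈ restrictSupport A {m | r m w} ∧ coeff w p = a := by
  let K : Submodule A (MvPolynomial X A) :=
    (orbitSpan G s).restrictScalars A ⊓ restrictSupport A {m | r m w}
  suffices Ideal.span (leadingCoeff r '' s) ≤ K.map (lcoeff A w) by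
    obtain ⟨p, ⟨hpG, hpw⟩, hp⟩ := this ha
    exact ⟨p, hpG, hpw, hp⟩
  refine Submodule.span_le.2 ?_
  rintro _ ⟨g, hg, rfl⟩
  obtain ⟨-, σ, hσ, u, hw, hu⟩ := hs g hg
  refine ⟨monomial u 1 * rename σ g,
    ⟨Ideal.mul_mem_left _ _ (rename_mem_orbitSpan hσ hg), ?_⟩, ?_⟩
  · exact monomial_mul_rename_mem_restrictSupport fun v hv => hw ▸ hu v (rel_leadingMonomial hv)
  · rw [lcoeff_apply, hw, coeff_add_mapDomain_monomial_mul_rename σ.injective]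
    rfl

theorem exists_mem_orbitSpan_leadingMonomial_sub_lt [CommRing A] {s : Set (MvPolynomial X A)}
    {f : MvPolynomial X A}
    (hs : ∀ g ∈ s, SymCancel G r (leadingMonomial r g) (leadingMonomial r f))
    (hf : leadingCoeff r f ∈ Ideal.span (leadingCoeff r '' s)) :
    ∃ p ∈ orbitSpan G s, f - p ≠ 0 → r (leadingMonomial r (f - p)) (leadingMonomial r f) ∧
      leadingMonomial r (f - p) ≠ leadingMonomial r f := by
  obtain ⟨p, hpG, hpw, hp⟩ := exists_mem_orbitSpan_coeff_eq hs hf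
  have hfw : f ∈ restrictSupport A {m | r m (leadingMonomial r f)} :=
    fun _ hm => rel_leadingMonomial hm
  refine ⟨p, hpG, leadingMonomial_lt_of_mem_restrictSupport (sub_mem hfw hpw) ?_⟩
  rw [coeff_sub, hp, leadingCoeff, sub_self]

theorem exists_seq_isMinimalInDiff_orbitSpan [CommSemiring A]
    (hwf : WellFounded fun v w : X →₀ ℕ => r v w ∧ v ≠ w) {I : Ideal (MvPolynomial X A)}
    (hI : ∀ σ ∈ G, ∀ f ∈ I, rename σ f ∈ I)
    (hfg : ∀ B : Finset (MvPolynomial X A), ↑B ⊆ (I : Set (MvPolynomial X A)) →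
      I ≠ orbitSpan G ↑B) :
    ∃ F : ℕ → Finset (MvPolynomial X A) × MvPolynomial X A,
      (∀ n, ↑(F n).1 ⊆ (I : Set (MvPolynomial X A)) ∧
        IsMinimalInDiff r I (orbitSpan G ↑(F n).1) (F n).2) ∧
      ∀ m n, m < n → (F m).2 ∈ (F n).1 := by
  classical
  refine exists_seq_of_forall_finset_exists (α := Finset (MvPolynomial X A) × MvPolynomial X A)
    (fun p => ↑p.1 ⊆ (I : Set (MvPolynomial X A)) ∧ IsMinimalInDiff r I (orbitSpan G ↑p.1) p.2)
    (fun p q => p.2 ∈ q.1) fun S hS => ?_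
  have hBI : ↑(S.image Prod.snd) ⊆ (I : Set (MvPolynomial X A)) := by
    rw [Finset.coe_image]
    rintro _ ⟨p, hp, rfl⟩
    exact (hS p hp).2.1
  have hne : ((I : Set (MvPolynomial X A)) \
      orbitSpan G (S.image Prod.snd : Set (MvPolynomial X A))).Nonempty :=
    Set.sdiff_nonempty.2 fun h =>
      hfg _ hBI (le_antisymm (SetLike.coe_subset_coe.1 h) (orbitSpan_le hI hBI))
  obtain ⟨g, ⟨hgI, hgB⟩, hmin⟩ := (InvImage.wf (leadingMonomial r) hwf).has_min _ hne
  exact ⟨(S.image Prod.snd, g), ⟨hBI, hgI, hgB, fun h hI hB => hmin h ⟨hI, hB⟩⟩,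
    fun p hp => Finset.mem_image_of_mem _ hp⟩

end Reduction

end MvPolynomial

/-- If the monomials admit a term ordering lovely for `G` (the
corresponding symmetric cancellation ordering is a wqo), then every `G`-invariant ideal
of `A[X]` (`A` commutative Noetherian) is finitely generated as an `A[X][G]`-module. -/
theorem stmt1 {A : Type*} [CommRing A] [IsNoetherianRing A] {X : Type*}
    (G : Subgroup (Equiv.Perm X)) (r : (X →₀ ℕ) → (X →₀ ℕ) → Prop)
    (hr : IsTermOrder r) (hlovely : IsWQO (SymCancel G r))
    (I : Ideal (MvPolynomial X A))
    (hI : ∀ σ ∈ G, ∀ f ∈ I, MvPolynomial.rename (⇑σ) f ∈ I) :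
    ∃ B : Finset (MvPolynomial X A), ↑B ⊆ (I : Set (MvPolynomial X A)) ∧
      I = Ideal.span {p : MvPolynomial X A |
        ∃ σ ∈ G, ∃ b ∈ B, p = MvPolynomial.rename (⇑σ) b} := by
  have : IsLinearOrder _ r := hr.1
  by_contra! hfg
  obtain ⟨F, hF, hFB⟩ := exists_seq_isMinimalInDiff_orbitSpan hr.2.1 hI hfg
  let f n := (F n).2
  obtain ⟨φ, hφ⟩ := WellQuasiOrdered.exists_monotone_subseq hlovely (leadingMonomial r ∘ f)
  obtain ⟨N, hN⟩ := IsNoetherian.exists_mem_span_image_Iio (R := A) (leadingCoeff r ∘ f ∘ φ)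
  obtain ⟨p, hp, hlt⟩ := exists_mem_orbitSpan_leadingMonomial_sub_lt
    (s := (f ∘ φ) '' Set.Iio N) (f := f (φ N))
    (by rintro _ ⟨k, hk, rfl⟩; exact hφ k N hk.le) (by rwa [Set.image_image])
  obtain ⟨hBI, hfI, hfB, hmin⟩ := hF (φ N)
  have hpB : p ∈ orbitSpan G ↑(F (φ N)).1 :=
    orbitSpan_mono (by rintro _ ⟨k, hk, rfl⟩; exact hFB _ _ (φ.strictMono hk)) hp
  have hsub : f (φ N) - p ∉ orbitSpan G ↑(F (φ N)).1 :=
    fun h => hfB (by simpa using add_mem h hpB)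
  exact hmin _ (sub_mem hfI (orbitSpan_le hI hBI hpB)) hsub
    (hlt fun h => hsub (h ▸ zero_mem _))
end

section
/- Let X be a set equipped with a cardinal well-ordering ≤. Then the symmetric cancellation ordering on the monoid X^⋄ of monomials corresponding to the full symmetric group 𝔖_X of X and the lexicographic term ordering ≤_lex induced by ≤ is a well-quasi-ordering (that is, ≤_lex is lovely for 𝔖_X). -/
open Finsupp

theorem wellQuasiOrdered_sublistForall₂ {α : Type*} [Preorder α] [WellQuasiOrderedLE α] :
    WellQuasiOrdered (List.SublistForall₂ ((· ≤ ·) : α → α → Prop)) := by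
  rw [← Set.partiallyWellOrderedOn_univ_iff]
  simpa using Set.PartiallyWellOrderedOn.partiallyWellOrderedOn_sublistForall₂ (· ≤ ·)
    (Set.partiallyWellOrderedOn_univ_iff.2 (wellQuasiOrdered_le (α := α)))

theorem List.SublistForall₂.exists_strictMonoOn {α : Type*} [Preorder α] {R : α → α → Prop}
    {l₁ l₂ : List α} (h : List.SublistForall₂ R l₁ l₂) (h₁ : l₁.Pairwise (· < ·))
    (h₂ : l₂.Pairwise (· < ·)) :
    ∃ φ : α → α, StrictMonoOn φ {x | x ∈ l₁} ∧ ∀ x ∈ l₁, R x (φ x) ∧ φ x ∈ l₂ := by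
  classical
  induction h with
  | nil => exact ⟨id, fun _ h => by simp at h, by simp⟩
  | @cons a b l₁ l₂ hab _ ih =>
    rw [List.pairwise_cons] at h₁ h₂
    obtain ⟨φ, hφ, hR⟩ := ih h₁.2 h₂.2
    have hne : ∀ x ∈ l₁, x ≠ a := fun x hx => (h₁.1 x hx).ne'
    refine ⟨Function.update φ a b, ?_, ?_⟩
    · intro x hx y hy hxy
      simp only [Set.mem_ofPred_eq, List.mem_cons] at hx hy
      rcases hx with rfl | hx <;> rcases hy with rfl | hy
      · exact absurd hxy (lt_irrefl _)
      · simpa [hne y hy] using h₂.1 _ (hR y hy).2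
      · exact absurd (h₁.1 x hx) hxy.not_gt
      · simpa [hne x hx, hne y hy] using hφ hx hy hxy
    · simp only [List.forall_mem_cons, Function.update_self]
      refine ⟨⟨hab, List.mem_cons_self⟩, fun x hx => ?_⟩
      rw [Function.update_of_ne (hne x hx)]
      exact ⟨(hR x hx).1, List.mem_cons_of_mem _ (hR x hx).2⟩
  | cons_right _ ih =>
    obtain ⟨φ, hφ, hR⟩ := ih h₁ (List.pairwise_cons.1 h₂).2
    exact ⟨φ, hφ, fun x hx => ⟨(hR x hx).1, List.mem_cons_of_mem _ (hR x hx).2⟩⟩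

section

variable {X : Type*} [LinearOrder X]

theorem lexLe_iff_toColex_le (v w : X →₀ ℕ) : LexLe v w ↔ toColex v ≤ toColex w := by
  rw [le_iff_eq_or_lt, Colex.lt_iff]
  simp only [LexLe, toColex_inj, and_comm]
  rfl

theorem LexLe.add_left {v w : X →₀ ℕ} (h : LexLe v w) (u : X →₀ ℕ) : LexLe (u + v) (u + w) := by
  rw [lexLe_iff_toColex_le] at h ⊢
  simpa only [toColex_add] using add_le_add_right h (toColex u)

theorem LexLe.mapDomain_perm {v' v : X →₀ ℕ} (h : LexLe v' v) {σ : Equiv.Perm X}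
    (hσ : ∀ x ∈ v.support, ∀ y < x, σ y < σ x) :
    LexLe (mapDomain σ v') (mapDomain σ v) := by
  rcases h with rfl | ⟨x, hlt, heq⟩
  · exact Or.inl rfl
  refine Or.inr ⟨σ x, by simpa [mapDomain_equiv_apply] using hlt, fun y hy => ?_⟩
  rw [mapDomain_equiv_apply, mapDomain_equiv_apply]
  rcases lt_trichotomy x (σ.symm y) with hx | rfl | hx
  · exact heq _ hx
  · simp at hy
  · have := hσ x (mem_support_iff.2 (by omega)) _ hx
    simp only [Equiv.apply_symm_apply] at this
    exact absurd hy this.not_gt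

theorem exists_perm_eqOn_of_strictMonoOn (s : Finset X) {φ : X → X} (hφ : StrictMonoOn φ s)
    (hle : ∀ a ∈ s, a ≤ φ a) :
    ∃ σ : Equiv.Perm X, (∀ a ∈ s, σ a = φ a) ∧ (∀ y ∉ s, σ y ≤ y) ∧
      ∀ z, (∀ a ∈ s, φ a < z) → σ z = z := by
  classical
  induction s using Finset.induction_on_max with
  | empty => exact ⟨1, by simp, fun _ _ => le_rfl, fun _ _ => rfl⟩
  | insert a t hta ih =>
    have hφa : a ≤ φ a := hle a (Finset.mem_insert_self a t)
    obtain ⟨σ, hσt, hσle, hσfix⟩ := ih (hφ.mono (by simp))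
      (fun b hb => hle b (Finset.mem_insert_of_mem hb))
    have hφt : ∀ b ∈ t, φ b < φ a := fun b hb =>
      hφ (by simp [hb]) (by simp) (hta b hb)
    refine ⟨σ * Equiv.swap a (φ a), ?_, ?_, ?_⟩
    · simp only [Finset.forall_mem_insert, Equiv.Perm.mul_apply, Equiv.swap_apply_left]
      refine ⟨hσfix _ hφt, fun b hb => ?_⟩
      rw [Equiv.swap_apply_of_ne_of_ne (hta b hb).ne (hta b hb |>.trans_le hφa).ne, hσt b hb]
    · intro y hy
      rw [Finset.mem_insert, not_or] at hy
      rw [Equiv.Perm.mul_apply]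
      by_cases hya : y = φ a
      · rw [hya, Equiv.swap_apply_right]
        exact (hσle a fun ha => (hta a ha).false).trans hφa
      · rw [Equiv.swap_apply_of_ne_of_ne hy.1 hya]
        exact hσle y hy.2
    · intro z hz
      have hφaz : φ a < z := hz a (Finset.mem_insert_self a t)
      rw [Equiv.Perm.mul_apply, Equiv.swap_apply_of_ne_of_ne (hφa.trans_lt hφaz).ne' hφaz.ne',
        hσfix z fun b hb => hz b (Finset.mem_insert_of_mem hb)]

theorem symCancel_top_lexLe_of_strictMonoOn {v w : X →₀ ℕ} (hvw : LexLe v w) {φ : X → X}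
    (hφ : StrictMonoOn φ v.support) (hle : ∀ x ∈ v.support, x ≤ φ x ∧ v x ≤ w (φ x)) :
    SymCancel ⊤ LexLe v w := by
  obtain ⟨σ, hσφ, hσle, -⟩ := exists_perm_eqOn_of_strictMonoOn v.support hφ fun x hx => (hle x hx).1
  have hσv : mapDomain σ v ≤ w := fun y => by
    rw [mapDomain_equiv_apply]
    by_cases hy : σ.symm y ∈ v.support
    · have := (hle _ hy).2
      rwa [← hσφ _ hy, Equiv.apply_symm_apply] at this
    · simp [notMem_support_iff.1 hy]
  have hσmono : ∀ x ∈ v.support, ∀ y < x, σ y < σ x := fun x hx y hyx => by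
    rw [hσφ x hx]
    by_cases hy : y ∈ v.support
    · rw [hσφ y hy]
      exact hφ hy hx hyx
    · exact (hσle y hy).trans_lt (hyx.trans_le (hle x hx).1)
  have hw : w = (w - mapDomain σ v) + mapDomain σ v := (tsub_add_cancel_of_le hσv).symm
  refine ⟨hvw, σ, Subgroup.mem_top σ, w - mapDomain σ v, hw, fun v' hv' => ?_⟩
  conv_rhs => rw [hw]
  exact (hv'.mapDomain_perm hσmono).add_left _

def monomialList (v : X →₀ ℕ) : List (X × ℕ) :=
  (v.support.sort (· ≤ ·)).map fun x => (x, v x)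

theorem symCancel_top_lexLe_of_sublistForall₂ {v w : X →₀ ℕ} (hvw : LexLe v w)
    (h : List.SublistForall₂ (· ≤ ·) (monomialList v) (monomialList w)) :
    SymCancel ⊤ LexLe v w := by
  simp only [monomialList, List.sublistForall₂_map_left_iff,
    List.sublistForall₂_map_right_iff] at h
  obtain ⟨φ, hφ, hR⟩ := h.exists_strictMonoOn (Finset.sortedLT_sort _).pairwise
    (Finset.sortedLT_sort _).pairwise
  simp only [Finset.mem_sort] at hφ hR
  exact symCancel_top_lexLe_of_strictMonoOn hvw hφ fun x hx => Prod.mk_le_mk.1 (hR x hx).1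

end

theorem stmt2_general {X : Type*} [LinearOrder X] [WellFoundedLT X] :
    IsWQO (SymCancel (⊤ : Subgroup (Equiv.Perm X)) (LexLe (X := X))) := by
  intro f
  have : IsPreorder (List (X × ℕ)) (List.SublistForall₂ (· ≤ ·)) := {}
  obtain ⟨i, j, hij, hemb, hlex⟩ := wellQuasiOrdered_sublistForall₂.prod
    (wellQuasiOrdered_le (α := Colex (X →₀ ℕ))) fun n => (monomialList (f n), toColex (f n))
  exact ⟨i, j, hij, symCancel_top_lexLe_of_sublistForall₂ ((lexLe_iff_toColex_le _ _).2 hlex) hemb⟩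

/-- For a cardinal well-ordering of a set `X` (a well-ordering all of
whose proper initial segments have cardinality `< |X|`), the symmetric cancellation
ordering on monomials corresponding to the full symmetric group `𝔖_X` and the induced
lexicographic term ordering is a well-quasi-ordering (i.e. `≤lex` is lovely for `𝔖_X`). -/
theorem stmt2 {X : Type*} [LinearOrder X] [WellFoundedLT X]
    (hcard : ∀ a : X, Cardinal.mk {x : X // x < a} < Cardinal.mk X) :
    IsWQO (SymCancel (⊤ : Subgroup (Equiv.Perm X)) (LexLe (X := X))) :=
  stmt2_general
end

section
/- Let ≤ be a well-quasi-ordering on a set X. Then the relation ≤^⋄ on the set of finite multisets over X, defined by s ≤^⋄ t iff there exists a submultiset t' of t with the same cardinality as s together with a bijective matching of s with t' such that each element of s is ≤ its matched element of t', is a well-quasi-ordering. -/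
/-!
Every multiset is the image of a list, and a Higman embedding of lists `l₁` into `l₂`
(`List.SublistForall₂ r`) becomes, once the order is forgotten, a matching of `l₁` with a
submultiset of `l₂`. So the quotient map from lists to multisets is a surjective relation
homomorphism from Higman's ordering to the multiset ordering, and well-quasi-orderedness
passes to surjective images.
-/

theorem Multiset.rel_coe_of_forall₂ {α β : Type*} {r : α → β → Prop} {l₁ : List α}
    {l₂ : List β} (h : List.Forall₂ r l₁ l₂) : Multiset.Rel r (l₁ : Multiset α) l₂ := by
  induction h with
  | nil => exact Multiset.Rel.zero
  | cons hab _ ih => exact Multiset.Rel.cons hab ih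

theorem Multiset.exists_le_rel_of_sublistForall₂ {α : Type*} {r : α → α → Prop}
    {l₁ l₂ : List α} (h : List.SublistForall₂ r l₁ l₂) :
    ∃ t' : Multiset α, t' ≤ (l₂ : Multiset α) ∧ Multiset.Rel r (l₁ : Multiset α) t' := by
  obtain ⟨l, hforall, hsub⟩ := List.sublistForall₂_iff.1 h
  exact ⟨l, Multiset.coe_le.2 hsub.subperm, Multiset.rel_coe_of_forall₂ hforall⟩

theorem WellQuasiOrdered.sublistForall₂ {α : Type*} {r : α → α → Prop} [IsPreorder α r]
    (h : WellQuasiOrdered r) : WellQuasiOrdered (List.SublistForall₂ r) := by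
  rw [← Set.partiallyWellOrderedOn_univ_iff] at h ⊢
  simpa using h.partiallyWellOrderedOn_sublistForall₂ r

theorem WellQuasiOrdered.multiset {α : Type*} {r : α → α → Prop} [IsPreorder α r]
    (h : WellQuasiOrdered r) :
    WellQuasiOrdered fun s t : Multiset α => ∃ t' ≤ t, Multiset.Rel r s t' :=
  h.sublistForall₂.of_surjective
    ⟨((↑) : List α → Multiset α), Multiset.exists_le_rel_of_sublistForall₂⟩
    Quot.mk_surjective

/-- **Higman's lemma for multisets.** If `r` is a well-quasi-ordering on
`X`, then the relation on finite multisets over `X` given by "`s ≤⋄ t` iff there is a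
submultiset `t'` of `t` and a bijective matching of `s` with `t'` such that every element
of `s` is `r`-below its partner" is a well-quasi-ordering. -/
theorem stmt4 {X : Type*} (r : X → X → Prop)
    (hrefl : ∀ x : X, r x x)
    (htrans : ∀ x y z : X, r x y → r y z → r x z)
    (hwqo : ∀ f : ℕ → X, ∃ i j : ℕ, i < j ∧ r (f i) (f j)) :
    ∀ F : ℕ → Multiset X, ∃ i j : ℕ, i < j ∧
      ∃ t' : Multiset X, t' ≤ F j ∧ Multiset.Rel r (F i) t' := by
  have : IsPreorder X r := { refl := hrefl, trans := htrans }
  exact WellQuasiOrdered.multiset hwqo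
end

section
/- Let G be a group of permutations of a set X and let ≤ be a term ordering of the monoid X^⋄ of monomials. Then the symmetric cancellation relation ⪯ corresponding to G and ≤ is a partial ordering of X^⋄: it is reflexive, transitive, and antisymmetric. -/
/-- For a permutation group `G` on `X` and a term ordering `r` of the
monomials, the symmetric cancellation relation `⪯` is a partial ordering: reflexive,
transitive and antisymmetric. -/
theorem stmt5 {X : Type*} (G : Subgroup (Equiv.Perm X))
    (r : (X →₀ ℕ) → (X →₀ ℕ) → Prop) (hr : IsTermOrder r) :
    (∀ v : X →₀ ℕ, SymCancel G r v v) ∧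
    (∀ u v w : X →₀ ℕ, SymCancel G r u v → SymCancel G r v w → SymCancel G r u w) ∧
    (∀ v w : X →₀ ℕ, SymCancel G r v w → SymCancel G r w v → v = w) := by
  obtain ⟨hlin, -, -, -⟩ := hr
  haveI : IsLinearOrder (X →₀ ℕ) r := hlin
  refine ⟨?_, ?_, ?_⟩
  · intro v
    refine ⟨refl_of r v, 1, G.one_mem, 0, ?_, ?_⟩
    · simp [Finsupp.mapDomain_id]
    · intro v' hv'
      simpa [Finsupp.mapDomain_id] using hv'
  · rintro a b c ⟨hab, σ₁, hσ₁, u₁, rfl, h1⟩ ⟨hbc, σ₂, hσ₂, u₂, rfl, h2⟩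
    refine ⟨trans_of r hab hbc, σ₂ * σ₁, G.mul_mem hσ₂ hσ₁,
      u₂ + Finsupp.mapDomain (⇑σ₂) u₁, ?_, ?_⟩
    · simp [Equiv.Perm.coe_mul, Finsupp.mapDomain_comp, Finsupp.mapDomain_add, add_assoc]
    · intro v' hv'
      have := h2 _ (h1 _ hv')
      simpa [Equiv.Perm.coe_mul, Finsupp.mapDomain_comp, Finsupp.mapDomain_add,
        add_assoc] using this
  · rintro v w ⟨hvw, -⟩ ⟨hwv, -⟩
    exact antisymm_of r hvw hwv
end

section
/- Let A be a commutative ring, X a set, G a group of permutations of X, and ≤ a term ordering of X^⋄. Let f ∈ A[X] be nonzero and w a monomial. Suppose σ ∈ G witnesses lm(f) ⪯ w, i.e. lm(f) ≤ w, σ·lm(f) divides w, and σ·v' ≤ σ·lm(f) for every monomial v' ≤ lm(f); and let u be a monomial with u·σ·lm(f) = w. Then the leading monomial of the polynomial u·σ(f) equals u·σ·lm(f). -/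
namespace IsTermOrder

variable {X : Type*} {r : (X →₀ ℕ) → (X →₀ ℕ) → Prop}

theorem single_add_left (hr : IsTermOrder r) (x : X) (n : ℕ) {a b : X →₀ ℕ} (h : r a b) :
    r (Finsupp.single x n + a) (Finsupp.single x n + b) := by
  induction n with
  | zero => simpa using h
  | succ k ih =>
    rw [Finsupp.single_add, add_comm (Finsupp.single x k), add_assoc, add_assoc]
    exact hr.2.2.2 _ _ x ih

theorem add_left (hr : IsTermOrder r) (u : X →₀ ℕ) {a b : X →₀ ℕ} (h : r a b) :
    r (u + a) (u + b) := by
  induction u using Finsupp.induction with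
  | zero => simpa using h
  | single_add x n g _ _ ih =>
    rw [add_assoc, add_assoc]
    exact hr.single_add_left x n ih

end IsTermOrder

theorem MvPolynomial.support_monomial_one_mul {R σ : Type*} [CommSemiring R] (u : σ →₀ ℕ)
    (p : MvPolynomial σ R) :
    (monomial u (1 : R) * p).support = p.support.map (addLeftEmbedding u) :=
  AddMonoidAlgebra.support_coeff_single_mul p 1 (by simp) u

theorem MvPolynomial.support_monomial_one_mul_rename {R σ τ : Type*} [CommSemiring R]
    [DecidableEq τ] {e : σ → τ} (he : e.Injective) (u : τ →₀ ℕ) (p : MvPolynomial σ R) :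
    (monomial u (1 : R) * rename e p).support =
      p.support.image (fun m => u + Finsupp.mapDomain e m) := by
  rw [support_monomial_one_mul, support_rename_of_injective he, Finset.map_eq_image,
    Finset.image_image]
  rfl

theorem stmt6_general {A : Type*} [CommRing A] {X : Type*}
    (r : (X →₀ ℕ) → (X →₀ ℕ) → Prop) (hr : IsTermOrder r)
    (f : MvPolynomial X A)
    (v : X →₀ ℕ) (hv : v ∈ f.support) (hvmax : ∀ m ∈ f.support, r m v)
    (σ : Equiv.Perm X)
    (hwit : ∀ v' : X →₀ ℕ, r v' v →
      r (Finsupp.mapDomain (⇑σ) v') (Finsupp.mapDomain (⇑σ) v))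
    (u : X →₀ ℕ) :
    (u + Finsupp.mapDomain (⇑σ) v) ∈
        (MvPolynomial.monomial u (1 : A) * MvPolynomial.rename (⇑σ) f).support ∧
      ∀ m ∈ (MvPolynomial.monomial u (1 : A) * MvPolynomial.rename (⇑σ) f).support,
        r m (u + Finsupp.mapDomain (⇑σ) v) := by
  classical
  rw [MvPolynomial.support_monomial_one_mul_rename σ.injective]
  refine ⟨Finset.mem_image_of_mem _ hv, Finset.forall_mem_image.mpr fun m hm => ?_⟩
  exact hr.add_left u (hwit m (hvmax m hm))

/-- Let `f ∈ A[X]` be nonzero with leading monomial `v = lm f` (with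
respect to a term ordering `r`), let `σ ∈ G` witness `lm f ⪯ w`, i.e. `r (lm f) w`,
`σ·lm f ∣ w` and `σ v' ≤ σ (lm f)` for all `v' ≤ lm f`, and let `u` be a monomial with
`u·σ·lm f = w`.  Then the leading monomial of `u·σ(f)` is `u·σ·lm f`. -/
theorem stmt6 {A : Type*} [CommRing A] {X : Type*}
    (G : Subgroup (Equiv.Perm X))
    (r : (X →₀ ℕ) → (X →₀ ℕ) → Prop) (hr : IsTermOrder r)
    (f : MvPolynomial X A) (hf : f ≠ 0) (w : X →₀ ℕ)
    (v : X →₀ ℕ) (hv : v ∈ f.support) (hvmax : ∀ m ∈ f.support, r m v)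
    (σ : Equiv.Perm X) (hσG : σ ∈ G)
    (hrvw : r v w)
    (hwit : ∀ v' : X →₀ ℕ, r v' v →
      r (Finsupp.mapDomain (⇑σ) v') (Finsupp.mapDomain (⇑σ) v))
    (u : X →₀ ℕ) (hu : w = u + Finsupp.mapDomain (⇑σ) v) :
    (u + Finsupp.mapDomain (⇑σ) v) ∈
        (MvPolynomial.monomial u (1 : A) * MvPolynomial.rename (⇑σ) f).support ∧
      ∀ m ∈ (MvPolynomial.monomial u (1 : A) * MvPolynomial.rename (⇑σ) f).support,
        r m (u + Finsupp.mapDomain (⇑σ) v) :=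
  stmt6_general r hr f v hv hvmax σ hwit u
end

section
/- Let X be a set with a well-ordering ≤, let ≤_lex be the induced lexicographic term ordering of X^⋄, and let ⪯ be the symmetric cancellation ordering corresponding to the full symmetric group 𝔖_X and ≤_lex. Let v, w be monomials with v ⪯ w. Then: (a) every σ ∈ 𝔖_X witnessing v ⪯ w satisfies σ(X^{≤|v|}) ⊆ X^{≤|w|}; and (b) if the order type of (X, ≤) is at most ω, then there exists a witness σ for v ⪯ w with the additional property that σ(x) = x for all x > |w|. -/
/-!
Let `σ` witness `v ⪯ w`. Moving one unit of exponent of `v` from a variable `y ∣ v` down to a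
smaller variable `x` produces a monomial `v' <lex v`; if `σ` reversed the order of `x` and `y`,
then `σ v'` would exceed `σ v` at its largest differing variable `σ x`.
So `σ` is strictly monotone below each variable of `v`, which gives (a), since `σ y ∣ w` for
`y ∣ v`. For (b), only the values of `σ` on `X^{≤|v|}` matter, and they land in the finite set
`X^{≤|w|}` by (a); any injection of a subset of a finite set into it extends to a permutation of
that set, and hence to a permutation of `X` fixing everything above `|w|`.
-/

section

open Finsupp Set Equiv

variable {X : Type*}

theorem Set.InjOn.exists_perm_eqOn_of_mapsTo {f : X → X} {A B : Set X} (hf : InjOn f A)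
    (hfAB : MapsTo f A B) (hAB : A ⊆ B) (hB : B.Finite) :
    ∃ τ : Perm X, EqOn τ f A ∧ ∀ x ∉ B, τ x = x := by
  classical
  lift B to Finset X using hB
  obtain ⟨g, hg⟩ := MapsTo.exists_equiv_extend_of_card_eq (α := B) (t := B)
    (s := {b : B | (b : X) ∈ A}) (f := f ∘ Subtype.val) (Fintype.card_coe B) (fun _ hb => hfAB hb)
    (fun _ ha _ hb h => Subtype.ext (hf ha hb h))
  refine ⟨Perm.ofSubtype g, fun x hx => ?_, fun x hx => Perm.ofSubtype_apply_of_not_mem g hx⟩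
  rw [Perm.ofSubtype_apply_of_mem g (hAB hx)]
  exact hg ⟨x, hAB hx⟩ hx

theorem Set.Finite.lowerClosure_of_forall_finite_Iio [PartialOrder X]
    (hfin : ∀ a : X, (Iio a).Finite) {s : Set X} (hs : s.Finite) :
    (lowerClosure s : Set X).Finite := by
  rw [coe_lowerClosure]
  exact hs.biUnion fun a _ => Iio_insert (a := a) ▸ (hfin a).insert a

section LexLe

variable [LinearOrder X] {u v v' w : X →₀ ℕ}

theorem LexLe.of_add_left (h : LexLe (u + v) (u + w)) : LexLe v w := by
  rcases h with h | ⟨x, hx, hgt⟩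
  · exact .inl (add_left_cancel h)
  · refine .inr ⟨x, ?_, fun y hy => ?_⟩
    · simpa only [Finsupp.add_apply, add_lt_add_iff_left] using hx
    · simpa only [Finsupp.add_apply, add_right_inj] using hgt y hy

theorem not_lexLe_of_lt_of_forall_gt_eq {x : X} (hx : w x < v x)
    (hgt : ∀ y, x < y → v y = w y) : ¬LexLe v w := by
  rintro (rfl | ⟨z, hz, hgtz⟩)
  · exact hx.false
  rcases lt_trichotomy z x with hzx | rfl | hxz
  · exact (hgtz x hzx).not_gt hx
  · exact hz.not_gt hx
  · exact (hgt z hxz).not_lt hz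

theorem LexLe.support_subset_lowerClosure (h : LexLe v' v) :
    (v'.support : Set X) ⊆ lowerClosure (v.support : Set X) := by
  intro s hs
  rcases h with rfl | ⟨x, hx, hgt⟩
  · exact subset_lowerClosure hs
  rcases le_or_gt s x with hsx | hxs
  · exact ⟨x, mem_support_iff.mpr (by omega), hsx⟩
  · exact subset_lowerClosure (mem_support_iff.mpr (hgt s hxs ▸ mem_support_iff.mp hs))

theorem LexLe.lowerClosure_support_le (h : LexLe v w) :
    lowerClosure (v.support : Set X) ≤ lowerClosure (w.support : Set X) :=
  lowerClosure_min h.support_subset_lowerClosure (lowerClosure _).lower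

def PreservesLexBelow (σ : Perm X) (v : X →₀ ℕ) : Prop :=
  ∀ v' : X →₀ ℕ, LexLe v' v → LexLe (mapDomain σ v') (mapDomain σ v)

def IsSymCancelWitness (σ : Perm X) (v w : X →₀ ℕ) : Prop :=
  LexLe v w ∧ (∃ u : X →₀ ℕ, w = u + mapDomain σ v) ∧ PreservesLexBelow σ v

theorem SymCancel.exists_isSymCancelWitness
    (h : SymCancel (⊤ : Subgroup (Perm X)) LexLe v w) : ∃ σ, IsSymCancelWitness σ v w := by
  obtain ⟨hvw, σ, -, u, rfl, hu⟩ := h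
  exact ⟨σ, hvw, ⟨u, rfl⟩, fun v' hv' => (hu v' hv').of_add_left⟩

theorem PreservesLexBelow.apply_lt_apply {σ : Perm X} (hσ : PreservesLexBelow σ v) {x y : X}
    (hy : y ∈ v.support) (hxy : x < y) : σ x < σ y := by
  rw [mem_support_iff] at hy
  set v' := v - single y 1 + single x 1
  have hv'x : v' x = v x + 1 := by simp [v', hxy.ne]
  have hv'y : v' y + 1 = v y := by simp [v', hxy.ne']; omega
  have hv' : ∀ s, s ≠ x → s ≠ y → v' s = v s := fun s hsx hsy => by
    simp [v', hsx.symm, hsy.symm]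
  have hlex : LexLe v' v :=
    .inr ⟨y, by omega, fun s hs => hv' s (hxy.trans hs).ne' hs.ne'⟩
  by_contra! hle
  have hlt : σ y < σ x := hle.lt_of_ne (σ.injective.ne hxy.ne')
  refine not_lexLe_of_lt_of_forall_gt_eq (x := σ x) ?_ (fun z hz => ?_) (hσ v' hlex)
  · simp only [mapDomain_apply σ.injective, hv'x, Nat.lt_succ_self]
  · obtain ⟨s, rfl⟩ := σ.surjective z
    rw [mapDomain_apply σ.injective, mapDomain_apply σ.injective]
    exact hv' s (by rintro rfl; exact hz.false) (by rintro rfl; exact (hlt.trans hz).false)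

theorem IsSymCancelWitness.mapsTo_lowerClosure {σ : Perm X} (hσ : IsSymCancelWitness σ v w) :
    MapsTo σ (lowerClosure (v.support : Set X)) (lowerClosure (w.support : Set X)) := by
  obtain ⟨-, ⟨u, rfl⟩, hpres⟩ := hσ
  rintro x ⟨y, hy, hxy⟩
  refine ⟨σ y, ?_, ?_⟩
  · simp [mapDomain_apply σ.injective, mem_support_iff.mp hy]
  · rcases hxy.eq_or_lt with rfl | hxy
    · rfl
    · exact (hpres.apply_lt_apply hy hxy).le

theorem IsSymCancelWitness.of_eqOn {σ τ : Perm X} (hσ : IsSymCancelWitness σ v w)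
    (hτσ : EqOn τ σ (lowerClosure (v.support : Set X))) : IsSymCancelWitness τ v w := by
  have hmap : ∀ v', LexLe v' v → mapDomain τ v' = mapDomain σ v' := fun v' hv' =>
    mapDomain_congr fun s hs => hτσ (hv'.support_subset_lowerClosure hs)
  obtain ⟨hvw, ⟨u, hu⟩, hpres⟩ := hσ
  refine ⟨hvw, ⟨u, hmap v (.inl rfl) ▸ hu⟩, fun v' hv' => ?_⟩
  rw [hmap v' hv', hmap v (.inl rfl)]
  exact hpres v' hv'

end LexLe

end

theorem stmt7_general {X : Type*} [LinearOrder X]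
    (v w : X →₀ ℕ) (hvw : SymCancel (⊤ : Subgroup (Equiv.Perm X)) (LexLe (X := X)) v w) :
    (∀ σ : Equiv.Perm X,
      (LexLe v w ∧ (∃ u : X →₀ ℕ, w = u + Finsupp.mapDomain (⇑σ) v) ∧
        ∀ v' : X →₀ ℕ, LexLe v' v →
          LexLe (Finsupp.mapDomain (⇑σ) v') (Finsupp.mapDomain (⇑σ) v)) →
      ∀ x : X, (∃ y ∈ v.support, x ≤ y) → ∃ z ∈ w.support, σ x ≤ z) ∧
    ((∀ a : X, {x : X | x < a}.Finite) →
      ∃ σ : Equiv.Perm X,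
        (LexLe v w ∧ (∃ u : X →₀ ℕ, w = u + Finsupp.mapDomain (⇑σ) v) ∧
          ∀ v' : X →₀ ℕ, LexLe v' v →
            LexLe (Finsupp.mapDomain (⇑σ) v') (Finsupp.mapDomain (⇑σ) v)) ∧
        ∀ x : X, (∀ z ∈ w.support, z < x) → σ x = x) := by
  refine ⟨fun σ hσ x hx => IsSymCancelWitness.mapsTo_lowerClosure hσ hx, fun hfin => ?_⟩
  obtain ⟨σ, hσ⟩ := hvw.exists_isSymCancelWitness
  obtain ⟨τ, hτσ, hτ⟩ := σ.injective.injOn.exists_perm_eqOn_of_mapsTo hσ.mapsTo_lowerClosure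
    hσ.1.lowerClosure_support_le (w.support.finite_toSet.lowerClosure_of_forall_finite_Iio hfin)
  refine ⟨τ, hσ.of_eqOn hτσ, fun x hx => hτ x ?_⟩
  rintro ⟨z, hz, hxz⟩
  exact (hx z hz).not_ge hxz

/-- Let `X` be well-ordered, `≤lex` the induced lexicographic term
ordering, `⪯` the symmetric cancellation ordering for the full symmetric group, and
`v ⪯ w`.  (a) Every witness `σ` of `v ⪯ w` maps `X^{≤|v|}` into `X^{≤|w|}` (expressed:
if `x` is below some element of the support of `v` then `σ x` is below some element of
the support of `w`).  (b) If the order type of `X` is at most `ω` (every element has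
finitely many predecessors), there is a witness `σ` of `v ⪯ w` fixing every `x > |w|`
(every `x` strictly above all of the support of `w`). -/
theorem stmt7 {X : Type*} [LinearOrder X] [WellFoundedLT X]
    (v w : X →₀ ℕ) (hvw : SymCancel (⊤ : Subgroup (Equiv.Perm X)) (LexLe (X := X)) v w) :
    (∀ σ : Equiv.Perm X,
      (LexLe v w ∧ (∃ u : X →₀ ℕ, w = u + Finsupp.mapDomain (⇑σ) v) ∧
        ∀ v' : X →₀ ℕ, LexLe v' v →
          LexLe (Finsupp.mapDomain (⇑σ) v') (Finsupp.mapDomain (⇑σ) v)) →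
      ∀ x : X, (∃ y ∈ v.support, x ≤ y) → ∃ z ∈ w.support, σ x ≤ z) ∧
    ((∀ a : X, {x : X | x < a}.Finite) →
      ∃ σ : Equiv.Perm X,
        (LexLe v w ∧ (∃ u : X →₀ ℕ, w = u + Finsupp.mapDomain (⇑σ) v) ∧
          ∀ v' : X →₀ ℕ, LexLe v' v →
            LexLe (Finsupp.mapDomain (⇑σ) v') (Finsupp.mapDomain (⇑σ) v)) ∧
        ∀ x : X, (∀ z ∈ w.support, z < x) → σ x = x) :=
  stmt7_general v w hvw
end

section
/- Let X = {x_1, x_2, …} be countably infinite, well-ordered by x_1 < x_2 < ⋯, let ≤_lex be the induced lexicographic ordering of X^⋄, and let ⪯ be the symmetric cancellation ordering corresponding to the group 𝔖_(X) of finitary permutations of X and ≤_lex. Suppose x_1^{a_1}⋯x_n^{a_n} ⪯ x_1^{b_1}⋯x_n^{b_n}, where a_i, b_j ∈ ℕ and b_n > 0. Then for every c ∈ ℕ one has x_1^{a_1}⋯x_n^{a_n} ⪯ x_1^c x_2^{b_1}⋯x_{n+1}^{b_n}. -/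
/-- The group of finitary permutations of `X` (those moving only finitely many points). -/
def finitaryPerms (X : Type*) : Subgroup (Equiv.Perm X) where
  carrier := {σ : Equiv.Perm X | {x : X | σ x ≠ x}.Finite}
  one_mem' := by simp
  mul_mem' := by
    intro σ τ hσ hτ
    refine Set.Finite.subset (Set.Finite.union hσ hτ) ?_
    intro x hx
    by_contra h
    simp only [Set.mem_union, Set.mem_setOf_eq] at h hx
    push_neg at h
    exact hx (by simp [Equiv.Perm.mul_apply, h.1, h.2])
  inv_mem' := by
    intro σ hσ
    refine Set.Finite.subset hσ ?_
    intro x hx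
    simp only [Set.mem_setOf_eq] at hx ⊢
    intro h
    exact hx (Equiv.Perm.inv_eq_iff_eq.mpr h.symm)

/-- The cycle `0 → 1 → ⋯ → n+1 → 0` on `ℕ`. -/
def tauCyc (n : ℕ) : Equiv.Perm ℕ where
  toFun i := if i = n + 1 then 0 else if i ≤ n then i + 1 else i
  invFun i := if i = 0 then n + 1 else if i ≤ n + 1 then i - 1 else i
  left_inv := by intro i; dsimp only; split_ifs <;> first | omega | tauto
  right_inv := by intro i; dsimp only; split_ifs <;> first | omega | tauto

lemma tauCyc_apply_le (n i : ℕ) (h : i ≤ n) : tauCyc n i = i + 1 := by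
  simp only [tauCyc, Equiv.coe_fn_mk]; split_ifs <;> omega

lemma tauCyc_symm_apply (n i : ℕ) :
    (tauCyc n).symm i = if i = 0 then n + 1 else if i ≤ n + 1 then i - 1 else i := rfl

lemma tauCyc_symm_succ (n x : ℕ) (h : x ≤ n) : (tauCyc n).symm (x + 1) = x := by
  rw [tauCyc_symm_apply]; split_ifs <;> first | omega | tauto

lemma tauCyc_mem (n : ℕ) : tauCyc n ∈ finitaryPerms ℕ := by
  show {x : ℕ | tauCyc n x ≠ x}.Finite
  refine Set.Finite.subset (Set.finite_Iio (n + 2)) ?_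
  intro x hx
  simp only [Set.mem_setOf_eq, tauCyc, Equiv.coe_fn_mk] at hx
  simp only [Set.mem_Iio]
  by_contra hc
  push_neg at hc
  rw [if_neg (by omega), if_neg (by omega)] at hx
  exact hx rfl

lemma mapDomain_tauCyc_apply (n : ℕ) (p : ℕ →₀ ℕ) (j : ℕ) :
    Finsupp.mapDomain (⇑(tauCyc n)) p j = p ((tauCyc n).symm j) :=
  Finsupp.mapDomain_equiv_apply (f := tauCyc n) p j

/-- Key monotonicity lemma: shifting by the cycle and adding a power of `x_1`
preserves the lexicographic ordering against a monomial topped at `x_{n+1}`. -/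
lemma lexle_shift (n c : ℕ) (q : ℕ →₀ ℕ) (hq : ∀ y, n < y → q y = 0) (hqn : q n ≠ 0)
    (p : ℕ →₀ ℕ) (h : LexLe p q) :
    LexLe (Finsupp.single 0 c + Finsupp.mapDomain (⇑(tauCyc n)) p)
          (Finsupp.single 0 c + Finsupp.mapDomain (⇑(tauCyc n)) q) := by
  rcases h with rfl | ⟨x, hx, hagree⟩
  · exact Or.inl rfl
  · have hxn : x ≤ n := by
      by_contra hc; push_neg at hc
      exact absurd (hq x hc ▸ hx) (by omega)
    have hp : ∀ y, n < y → p y = 0 := fun y hy => (hagree y (by omega)).trans (hq y hy)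
    refine Or.inr ⟨x + 1, ?_, ?_⟩
    · simp only [Finsupp.add_apply, mapDomain_tauCyc_apply, tauCyc_symm_succ n x hxn]
      exact Nat.add_lt_add_left hx _
    · intro y hy
      have hz : x < (tauCyc n).symm y := by
        rw [tauCyc_symm_apply]; split_ifs <;> first | omega | tauto
      simp only [Finsupp.add_apply, mapDomain_tauCyc_apply, hagree _ hz]

lemma sum_single_apply_gt (n : ℕ) (f : Fin (n + 1) → ℕ) {y : ℕ} (hy : n < y) :
    (∑ i : Fin (n + 1), Finsupp.single (i : ℕ) (f i)) y = 0 := by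
  rw [Finsupp.finset_sum_apply]
  refine Finset.sum_eq_zero fun i _ => ?_
  rw [Finsupp.single_apply, if_neg (by omega)]

lemma sum_single_apply_last (n : ℕ) (f : Fin (n + 1) → ℕ) :
    (∑ i : Fin (n + 1), Finsupp.single (i : ℕ) (f i)) n = f (Fin.last n) := by
  rw [Finsupp.finset_sum_apply, Finset.sum_eq_single (Fin.last n)]
  · rw [Finsupp.single_apply, if_pos (by simp [Fin.last])]
  · intro i _ hi
    rw [Finsupp.single_apply, if_neg]
    intro hc
    exact hi (by ext; simpa [Fin.last] using hc)
  · simp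


/-- With `X = ℕ` (representing `x_1 < x_2 < ⋯`, `x_{i+1} ↦ i`), `≤lex`
the lexicographic ordering and `⪯` the symmetric cancellation ordering for the finitary
symmetric group: if `x_1^{a_1}⋯x_{n+1}^{a_{n+1}} ⪯ x_1^{b_1}⋯x_{n+1}^{b_{n+1}}` with
`b_{n+1} > 0`, then for every `c`,
`x_1^{a_1}⋯x_{n+1}^{a_{n+1}} ⪯ x_1^c x_2^{b_1}⋯x_{n+2}^{b_{n+1}}`. -/
theorem stmt8 (n : ℕ) (a b : Fin (n + 1) → ℕ) (hb : 0 < b (Fin.last n))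
    (h : SymCancel (finitaryPerms ℕ) (LexLe (X := ℕ))
      (∑ i : Fin (n + 1), Finsupp.single (i : ℕ) (a i))
      (∑ i : Fin (n + 1), Finsupp.single (i : ℕ) (b i)))
    (c : ℕ) :
    SymCancel (finitaryPerms ℕ) (LexLe (X := ℕ))
      (∑ i : Fin (n + 1), Finsupp.single (i : ℕ) (a i))
      (Finsupp.single 0 c + ∑ i : Fin (n + 1), Finsupp.single ((i : ℕ) + 1) (b i)) := by
  obtain ⟨hlex, σ, hσ, u, hw, hdom⟩ := h
  set v := ∑ i : Fin (n + 1), Finsupp.single ((i : ℕ)) (a i) with hv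
  set w := ∑ i : Fin (n + 1), Finsupp.single ((i : ℕ)) (b i) with hwdef
  have hwn : w n ≠ 0 := by rw [hwdef, sum_single_apply_last]; omega
  have hwgt : ∀ y, n < y → w y = 0 := fun y hy => sum_single_apply_gt n b hy
  have hshift : Finsupp.mapDomain (⇑(tauCyc n)) w
      = ∑ i : Fin (n + 1), Finsupp.single ((i : ℕ) + 1) (b i) := by
    rw [hwdef, Finsupp.mapDomain_finset_sum]
    refine Finset.sum_congr rfl fun i _ => ?_
    rw [Finsupp.mapDomain_single, tauCyc_apply_le n i (by omega)]
  rw [← hshift]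
  constructor
  · refine Or.inr ⟨n + 1, ?_, ?_⟩
    · rw [hv, sum_single_apply_gt n a (by omega)]
      simp only [Finsupp.add_apply, mapDomain_tauCyc_apply, tauCyc_symm_succ n n le_rfl]
      omega
    · intro y hy
      rw [hv, sum_single_apply_gt n a (by omega)]
      have hz : n < (tauCyc n).symm y := by
        rw [tauCyc_symm_apply]; split_ifs <;> first | omega | tauto
      simp only [Finsupp.add_apply, mapDomain_tauCyc_apply, hwgt _ hz,
        Finsupp.single_apply, if_neg (show ¬ (0 : ℕ) = y by omega)]
  · refine ⟨tauCyc n * σ, mul_mem (tauCyc_mem n) hσ, Finsupp.single 0 c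
      + Finsupp.mapDomain (⇑(tauCyc n)) u, ?_, ?_⟩
    · have hc : Finsupp.mapDomain (⇑(tauCyc n * σ)) v
          = Finsupp.mapDomain (⇑(tauCyc n)) (Finsupp.mapDomain (⇑σ) v) := by
        rw [← Finsupp.mapDomain_comp]; rfl
      rw [hc, add_assoc, ← Finsupp.mapDomain_add, ← hw]
    · intro v' hv'
      have h1 := lexle_shift n c w hwgt hwn _ (hdom v' hv')
      have hc : Finsupp.mapDomain (⇑(tauCyc n * σ)) v'
          = Finsupp.mapDomain (⇑(tauCyc n)) (Finsupp.mapDomain (⇑σ) v') := by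
        rw [← Finsupp.mapDomain_comp]; rfl
      rw [add_assoc, hc, ← Finsupp.mapDomain_add]
      exact h1
end

section
/- Let X = {x_1, x_2, …} be countably infinite, well-ordered by x_1 < x_2 < ⋯, let ≤_lex be the induced lexicographic ordering of X^⋄, and let ⪯ be the symmetric cancellation ordering corresponding to the group 𝔖_(X) of finitary permutations of X and ≤_lex. Suppose x_1^{a_1}⋯x_n^{a_n} ⪯ x_1^{b_1}⋯x_n^{b_n}, where a_i, b_j ∈ ℕ and b_n > 0, and let a, b ∈ ℕ with a ≤ b. Then x_1^a x_2^{a_1}⋯x_{n+1}^{a_n} ⪯ x_1^b x_2^{b_1}⋯x_{n+1}^{b_n}. -/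
namespace Stmt9Aux

/-- Shift a monomial up by one variable. -/
noncomputable def S (t : ℕ →₀ ℕ) : ℕ →₀ ℕ := Finsupp.mapDomain Nat.succ t

lemma S_apply_succ (t : ℕ →₀ ℕ) (k : ℕ) : S t (k + 1) = t k :=
  Finsupp.mapDomain_apply Nat.succ_injective t k

lemma S_apply_zero (t : ℕ →₀ ℕ) : S t 0 = 0 := by
  apply Finsupp.mapDomain_notin_range
  rintro ⟨k, hk⟩
  exact Nat.succ_ne_zero k hk

lemma S_add (t t' : ℕ →₀ ℕ) : S (t + t') = S t + S t' := Finsupp.mapDomain_add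

noncomputable def lift (c : ℕ) (z : ℕ →₀ ℕ) : ℕ →₀ ℕ := Finsupp.single 0 c + S z

lemma lift_apply_zero (c : ℕ) (z : ℕ →₀ ℕ) : lift c z 0 = c := by
  simp [lift, S_apply_zero]

lemma lift_apply_succ (c : ℕ) (z : ℕ →₀ ℕ) (k : ℕ) : lift c z (k + 1) = z k := by
  simp [lift, S_apply_succ, Finsupp.single_apply]

lemma lift_add (c d : ℕ) (z z' : ℕ →₀ ℕ) :
    lift c z + lift d z' = lift (c + d) (z + z') := by
  simp only [lift, S_add, Finsupp.single_add]
  abel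

/-- Unshift. -/
noncomputable def U (t : ℕ →₀ ℕ) : ℕ →₀ ℕ :=
  Finsupp.comapDomain Nat.succ t (Nat.succ_injective.injOn)

lemma U_apply (t : ℕ →₀ ℕ) (k : ℕ) : U t k = t (k + 1) := rfl

lemma lift_U (t : ℕ →₀ ℕ) : lift (t 0) (U t) = t := by
  ext m
  cases m with
  | zero => simp [lift_apply_zero]
  | succ k => simp [lift_apply_succ, U_apply]

def shiftPerm (σ : Equiv.Perm ℕ) : Equiv.Perm ℕ where
  toFun k := match k with | 0 => 0 | m + 1 => σ m + 1
  invFun k := match k with | 0 => 0 | m + 1 => σ⁻¹ m + 1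
  left_inv k := by cases k <;> simp
  right_inv k := by cases k <;> simp

lemma shiftPerm_zero (σ : Equiv.Perm ℕ) : shiftPerm σ 0 = 0 := rfl
lemma shiftPerm_succ (σ : Equiv.Perm ℕ) (m : ℕ) : shiftPerm σ (m + 1) = σ m + 1 := rfl

lemma shiftPerm_mem {σ : Equiv.Perm ℕ} (hσ : σ ∈ finitaryPerms ℕ) :
    shiftPerm σ ∈ finitaryPerms ℕ := by
  have hσ' : {x : ℕ | σ x ≠ x}.Finite := hσ
  have hsub : {x : ℕ | shiftPerm σ x ≠ x} ⊆ Nat.succ '' {x : ℕ | σ x ≠ x} := by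
    intro x hx
    cases x with
    | zero => exact absurd rfl hx
    | succ m =>
      refine ⟨m, ?_, rfl⟩
      intro hm
      exact hx (by simp [shiftPerm_succ, hm])
  exact Set.Finite.subset (hσ'.image _) hsub

lemma map_lift (σ : Equiv.Perm ℕ) (c : ℕ) (z : ℕ →₀ ℕ) :
    Finsupp.mapDomain (⇑(shiftPerm σ)) (lift c z) =
      lift c (Finsupp.mapDomain (⇑σ) z) := by
  rw [lift, Finsupp.mapDomain_add, Finsupp.mapDomain_single, lift]
  have hc : Finsupp.mapDomain (⇑(shiftPerm σ)) (S z) = S (Finsupp.mapDomain (⇑σ) z) := by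
    rw [S, S, ← Finsupp.mapDomain_comp, ← Finsupp.mapDomain_comp]
    congr 1
  rw [hc]
  rfl

lemma lexle_lift_of_lt {x : ℕ} {z z' : ℕ →₀ ℕ} (c d : ℕ)
    (h1 : z x < z' x) (h2 : ∀ y : ℕ, x < y → z y = z' y) :
    LexLe (lift c z) (lift d z') := by
  refine Or.inr ⟨x + 1, by simpa [lift_apply_succ] using h1, ?_⟩
  intro y hy
  obtain ⟨k, rfl⟩ : ∃ k, y = k + 1 := ⟨y - 1, by omega⟩
  rw [lift_apply_succ, lift_apply_succ]
  exact h2 k (by omega)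

lemma lexle_lift_of_le_eq {c d : ℕ} (z : ℕ →₀ ℕ) (h : c ≤ d) :
    LexLe (lift c z) (lift d z) := by
  rcases eq_or_lt_of_le h with rfl | hlt
  · exact Or.inl rfl
  · refine Or.inr ⟨0, by simpa [lift_apply_zero] using hlt, ?_⟩
    intro y hy
    obtain ⟨k, rfl⟩ : ∃ k, y = k + 1 := ⟨y - 1, by omega⟩
    simp [lift_apply_succ]

end Stmt9Aux

/-- With `X = ℕ` (representing `x_1 < x_2 < ⋯`, `x_{i+1} ↦ i`), `≤lex`
the lexicographic ordering and `⪯` the symmetric cancellation ordering for the finitary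
symmetric group: if `x_1^{a_1}⋯x_{n+1}^{a_{n+1}} ⪯ x_1^{b_1}⋯x_{n+1}^{b_{n+1}}` with
`b_{n+1} > 0` and `a ≤ b` in `ℕ`, then
`x_1^a x_2^{a_1}⋯x_{n+2}^{a_{n+1}} ⪯ x_1^b x_2^{b_1}⋯x_{n+2}^{b_{n+1}}`. -/
theorem stmt9 (n : ℕ) (a b : Fin (n + 1) → ℕ) (hb : 0 < b (Fin.last n))
    (h : SymCancel (finitaryPerms ℕ) (LexLe (X := ℕ))
      (∑ i : Fin (n + 1), Finsupp.single (i : ℕ) (a i))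
      (∑ i : Fin (n + 1), Finsupp.single (i : ℕ) (b i)))
    (a₀ b₀ : ℕ) (hab : a₀ ≤ b₀) :
    SymCancel (finitaryPerms ℕ) (LexLe (X := ℕ))
      (Finsupp.single 0 a₀ + ∑ i : Fin (n + 1), Finsupp.single ((i : ℕ) + 1) (a i))
      (Finsupp.single 0 b₀ + ∑ i : Fin (n + 1), Finsupp.single ((i : ℕ) + 1) (b i)) := by

  classical
  open Stmt9Aux in
  obtain ⟨hlex, σ, hσG, u, hw, hmin⟩ := h
  set V : ℕ →₀ ℕ := ∑ i : Fin (n + 1), Finsupp.single (i : ℕ) (a i) with hVdef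
  set W : ℕ →₀ ℕ := ∑ i : Fin (n + 1), Finsupp.single (i : ℕ) (b i) with hWdef
  have hSa : ∑ i : Fin (n + 1), Finsupp.single ((i : ℕ) + 1) (a i) = Stmt9Aux.S V := by
    rw [hVdef, Stmt9Aux.S, Finsupp.mapDomain_finset_sum]
    simp [Finsupp.mapDomain_single]
  have hSb : ∑ i : Fin (n + 1), Finsupp.single ((i : ℕ) + 1) (b i) = Stmt9Aux.S W := by
    rw [hWdef, Stmt9Aux.S, Finsupp.mapDomain_finset_sum]
    simp [Finsupp.mapDomain_single]
  rw [hSa, hSb]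
  show SymCancel _ _ (Stmt9Aux.lift a₀ V) (Stmt9Aux.lift b₀ W)
  refine ⟨?_, Stmt9Aux.shiftPerm σ, Stmt9Aux.shiftPerm_mem hσG,
    Stmt9Aux.lift (b₀ - a₀) u, ?_, ?_⟩
  · -- lex comparison of the lifted monomials
    rcases hlex with heq | ⟨x, h1, h2⟩
    · rw [heq]; exact Stmt9Aux.lexle_lift_of_le_eq W hab
    · exact Stmt9Aux.lexle_lift_of_lt a₀ b₀ h1 h2
  · rw [Stmt9Aux.map_lift, Stmt9Aux.lift_add, Nat.sub_add_cancel hab, ← hw]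
  · intro t ht
    rw [← Stmt9Aux.lift_U t] at ht ⊢
    set t0 := t 0 with ht0
    set s := Stmt9Aux.U t with hs
    rw [Stmt9Aux.map_lift, Stmt9Aux.lift_add]
    rcases ht with heq | ⟨x, h1, h2⟩
    · -- t = lift a₀ V
      have hc : t0 = a₀ := by
        have := congrArg (fun f : ℕ →₀ ℕ => f 0) heq
        simpa [Stmt9Aux.lift_apply_zero] using this
      have hz : s = V := by
        ext k
        have := congrArg (fun f : ℕ →₀ ℕ => f (k + 1)) heq
        simpa [Stmt9Aux.lift_apply_succ] using this
      rw [hc, hz, Nat.sub_add_cancel hab, ← hw]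
      exact Or.inl rfl
    · cases x with
      | zero =>
        have h1' : t0 < a₀ := by simpa [Stmt9Aux.lift_apply_zero] using h1
        have hz : s = V := by
          ext k
          have := h2 (k + 1) (Nat.succ_pos k)
          simpa [Stmt9Aux.lift_apply_succ] using this
        rw [hz, ← hw]
        exact Stmt9Aux.lexle_lift_of_le_eq W (by omega)
      | succ k =>
        have h1' : s k < V k := by simpa [Stmt9Aux.lift_apply_succ] using h1
        have h2' : ∀ m : ℕ, k < m → s m = V m := by
          intro m hm
          have := h2 (m + 1) (by omega)
          simpa [Stmt9Aux.lift_apply_succ] using this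
        have hsV : LexLe s V := Or.inr ⟨k, h1', h2'⟩
        rcases hmin s hsV with heq | ⟨z, hz1, hz2⟩
        · exfalso
          rw [hw] at heq
          have : s = V := Finsupp.mapDomain_injective σ.injective (add_left_cancel heq)
          rw [this] at h1'
          exact lt_irrefl _ h1'
        · exact Stmt9Aux.lexle_lift_of_lt _ _ hz1 hz2
end

section
/- Let (S, ≤_S) be a well-quasi-ordered set, (T, ≤_T) a well-founded ordered set, and φ: S → T a decreasing map, i.e. s ≤_S t implies φ(t) ≤_T φ(s) for all s, t ∈ S. Then the quasi-ordering ≤_φ on S defined by s ≤_φ t iff s ≤_S t and φ(s) = φ(t) is a well-quasi-ordering. -/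
/-! Pass to a subsequence `f ∘ g` along which consecutive terms are `≤_S`-related (Ramsey, using
only that `≤_S` admits no infinite bad sequence). Along it `φ` is non-increasing, so by
well-foundedness of `T` some step keeps `φ` constant, giving the required good pair. -/

theorem WellQuasiOrdered.and_eq_of_antitone {S T : Type*} {rS : S → S → Prop}
    {rT : T → T → Prop} (hS : WellQuasiOrdered rS) (hT : WellFounded fun a b => rT a b ∧ a ≠ b)
    (φ : S → T) (hφ : ∀ s t, rS s t → rT (φ t) (φ s)) :
    WellQuasiOrdered fun s t => rS s t ∧ φ s = φ t := by
  intro f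
  obtain ⟨g, hchain | hbad⟩ := exists_increasing_or_nonincreasing_subseq' rS f
  · by_contra! hne
    have hdesc (n : ℕ) : rT (φ (f (g (n + 1)))) (φ (f (g n))) ∧ φ (f (g (n + 1))) ≠ φ (f (g n)) :=
      ⟨hφ _ _ (hchain n), (hne _ _ (g.strictMono n.lt_succ_self) (hchain n)).symm⟩
    exact (wellFounded_iff_isEmpty_descending_chain.1 hT).false ⟨fun n => φ (f (g n)), hdesc⟩
  · obtain ⟨i, j, hij, hrel⟩ := hS (f ∘ g)
    exact absurd hrel (hbad i j hij)

theorem stmt11_general {S T : Type*} (rS : S → S → Prop) (rT : T → T → Prop)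
    (hSwqo : ∀ f : ℕ → S, ∃ i j : ℕ, i < j ∧ rS (f i) (f j))
    (hTwf : ¬ ∃ g : ℕ → T, ∀ n : ℕ, rT (g (n + 1)) (g n) ∧ g (n + 1) ≠ g n)
    (φ : S → T) (hφ : ∀ s t : S, rS s t → rT (φ t) (φ s)) :
    ∀ f : ℕ → S, ∃ i j : ℕ, i < j ∧ (rS (f i) (f j) ∧ φ (f i) = φ (f j)) :=
  WellQuasiOrdered.and_eq_of_antitone hSwqo
    (wellFounded_iff_isEmpty_descending_chain.2 ⟨fun ⟨g, hg⟩ => hTwf ⟨g, hg⟩⟩) φ hφ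

/-- Let `(S, ≤_S)` be a well-quasi-ordered set, `(T, ≤_T)` a
well-founded ordered set (no infinite strictly decreasing sequences), and `φ : S → T`
decreasing.  Then the quasi-ordering `s ≤_φ t ↔ s ≤_S t ∧ φ s = φ t` is a
well-quasi-ordering. -/
theorem stmt11 {S T : Type*} (rS : S → S → Prop) (rT : T → T → Prop)
    (hSrefl : ∀ s : S, rS s s)
    (hStrans : ∀ s t u : S, rS s t → rS t u → rS s u)
    (hSwqo : ∀ f : ℕ → S, ∃ i j : ℕ, i < j ∧ rS (f i) (f j))
    (hT : IsPartialOrder T rT)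
    (hTwf : ¬ ∃ g : ℕ → T, ∀ n : ℕ, rT (g (n + 1)) (g n) ∧ g (n + 1) ≠ g n)
    (φ : S → T) (hφ : ∀ s t : S, rS s t → rT (φ t) (φ s)) :
    ∀ f : ℕ → S, ∃ i j : ℕ, i < j ∧ (rS (f i) (f j) ∧ φ (f i) = φ (f j)) :=
  stmt11_general rS rT hSwqo hTwf φ hφ
end

section
/- Let A be a nonzero commutative Noetherian ring, X a set, G a group of permutations of X, and R = A[X]. Define the quasi-ordering |_G on X^⋄ by v |_G w iff there exists σ ∈ G with σ(v) dividing w. If every G-invariant ideal of R is finitely generated as an R[G]-module (i.e., R is Noetherian as an R[G]-module), then |_G is a well-quasi-ordering on X^⋄. -/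
open MvPolynomial in
private theorem stmt14_aux {A : Type*} [CommRing A] [Nontrivial A] {X : Type*}
    (G : Subgroup (Equiv.Perm X))
    (hNoeth : ∀ I : Ideal (MvPolynomial X A),
      (∀ σ ∈ G, ∀ f ∈ I, MvPolynomial.rename (⇑σ) f ∈ I) →
      ∃ B : Finset (MvPolynomial X A), ↑B ⊆ (I : Set (MvPolynomial X A)) ∧
        I = Ideal.span {p : MvPolynomial X A |
          ∃ σ ∈ G, ∃ b ∈ B, p = MvPolynomial.rename (⇑σ) b})
    (f : ℕ → (X →₀ ℕ)) :
    ∃ i j : ℕ, i < j ∧ ∃ σ : Equiv.Perm X, σ ∈ G ∧ ∃ u : X →₀ ℕ,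
      f j = u + Finsupp.mapDomain (⇑σ) (f i) := by
  classical
  -- general stability lemma
  have hstab : ∀ (D' : Set (X →₀ ℕ)),
      (∀ σ ∈ G, ∀ d ∈ D', Finsupp.mapDomain (⇑σ) d ∈ D') →
      ∀ σ ∈ G, ∀ p ∈ Ideal.span ((fun d => monomial d (1 : A)) '' D'),
        MvPolynomial.rename (⇑σ) p ∈ Ideal.span ((fun d => monomial d (1 : A)) '' D') := by
    intro D' hD' σ hσ p hp
    have h1 : MvPolynomial.rename (⇑σ) p ∈
        Ideal.map (MvPolynomial.rename (⇑σ) : MvPolynomial X A →ₐ[A] MvPolynomial X A).toRingHom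
          (Ideal.span ((fun d => monomial d (1 : A)) '' D')) :=
      Ideal.mem_map_of_mem _ hp
    rw [Ideal.map_span] at h1
    refine Ideal.span_le.mpr ?_ h1
    rintro _ ⟨_, ⟨d, hd, rfl⟩, rfl⟩
    refine Ideal.subset_span ⟨Finsupp.mapDomain (⇑σ) d, hD' σ hσ d hd, ?_⟩
    simp [MvPolynomial.rename_monomial]
  set D : Set (X →₀ ℕ) := {d | ∃ σ ∈ G, ∃ i : ℕ, d = Finsupp.mapDomain (⇑σ) (f i)} with hDdef
  have hDstab : ∀ σ ∈ G, ∀ d ∈ D, Finsupp.mapDomain (⇑σ) d ∈ D := by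
    rintro σ hσ _ ⟨τ, hτ, i, rfl⟩
    exact ⟨σ * τ, mul_mem hσ hτ, i, by
      rw [← Finsupp.mapDomain_comp]; rfl⟩
  set I : Ideal (MvPolynomial X A) :=
    Ideal.span ((fun d => monomial d (1 : A)) '' D) with hIdef
  obtain ⟨B, hB, hI⟩ := hNoeth I (hstab D hDstab)
  -- index extraction
  have P : (X →₀ ℕ) → Prop := fun m => ∃ i : ℕ, ∃ σ ∈ G, Finsupp.mapDomain (⇑σ) (f i) ≤ m
  set idx : (X →₀ ℕ) → ℕ := fun m =>
    if h : ∃ i : ℕ, ∃ σ ∈ G, Finsupp.mapDomain (⇑σ) (f i) ≤ m then h.choose else 0 with hidx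
  have hidxspec : ∀ m, (∃ i : ℕ, ∃ σ ∈ G, Finsupp.mapDomain (⇑σ) (f i) ≤ m) →
      ∃ σ ∈ G, Finsupp.mapDomain (⇑σ) (f (idx m)) ≤ m := by
    intro m h
    simpa [hidx, dif_pos h] using h.choose_spec
  set N : ℕ := B.sup (fun b => b.support.sup idx) with hN
  set DN : Set (X →₀ ℕ) := {d | ∃ σ ∈ G, ∃ i ≤ N, d = Finsupp.mapDomain (⇑σ) (f i)} with hDN
  have hDNstab : ∀ σ ∈ G, ∀ d ∈ DN, Finsupp.mapDomain (⇑σ) d ∈ DN := by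
    rintro σ hσ _ ⟨τ, hτ, i, hi, rfl⟩
    exact ⟨σ * τ, mul_mem hσ hτ, i, hi, by rw [← Finsupp.mapDomain_comp]; rfl⟩
  set J : Ideal (MvPolynomial X A) :=
    Ideal.span ((fun d => monomial d (1 : A)) '' DN) with hJdef
  have hBJ : ∀ b ∈ B, b ∈ J := by
    intro b hb
    rw [hJdef, mem_ideal_span_monomial_image]
    intro m hm
    have hbI : b ∈ I := hB hb
    rw [hIdef, mem_ideal_span_monomial_image] at hbI
    obtain ⟨d, ⟨σ, hσ, i, rfl⟩, hdm⟩ := hbI m hm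
    obtain ⟨τ, hτ, hle⟩ := hidxspec m ⟨i, σ, hσ, hdm⟩
    refine ⟨Finsupp.mapDomain (⇑τ) (f (idx m)), ⟨τ, hτ, idx m, ?_, rfl⟩, hle⟩
    exact le_trans (Finset.le_sup hm) (Finset.le_sup (f := fun b => b.support.sup idx) hb)
  have hIJ : I ≤ J := by
    rw [hI, Ideal.span_le]
    rintro _ ⟨σ, hσ, b, hb, rfl⟩
    exact hstab DN hDNstab σ hσ b (hBJ b hb)
  have hmem : monomial (f (N + 1)) (1 : A) ∈ I := by
    refine Ideal.subset_span ⟨f (N + 1), ⟨1, one_mem G, N + 1, ?_⟩, rfl⟩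
    simp [Finsupp.mapDomain_id]
  have hmemJ := hIJ hmem
  rw [hJdef, mem_ideal_span_monomial_image] at hmemJ
  obtain ⟨d, ⟨σ, hσ, i, hi, rfl⟩, hle⟩ := hmemJ (f (N + 1)) (by
    rw [MvPolynomial.support_monomial]
    simp [one_ne_zero])
  obtain ⟨c, hc⟩ := le_iff_exists_add.mp hle
  exact ⟨i, N + 1, Nat.lt_succ_of_le hi, σ, hσ, c, by rw [hc, add_comm]⟩


/-- Let `A` be a nonzero commutative Noetherian ring, `G` a group of
permutations of `X`.  If every `G`-invariant ideal of `R = A[X]` is finitely generated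
as an `R[G]`-module, then the quasi-ordering `v |_G w ↔ ∃ σ ∈ G, σv ∣ w` is a
well-quasi-ordering on the monomials. -/
theorem stmt14 {A : Type*} [CommRing A] [Nontrivial A] [IsNoetherianRing A] {X : Type*}
    (G : Subgroup (Equiv.Perm X))
    (hNoeth : ∀ I : Ideal (MvPolynomial X A),
      (∀ σ ∈ G, ∀ f ∈ I, MvPolynomial.rename (⇑σ) f ∈ I) →
      ∃ B : Finset (MvPolynomial X A), ↑B ⊆ (I : Set (MvPolynomial X A)) ∧
        I = Ideal.span {p : MvPolynomial X A |
          ∃ σ ∈ G, ∃ b ∈ B, p = MvPolynomial.rename (⇑σ) b}) :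
    IsWQO (fun v w : X →₀ ℕ =>
      ∃ σ : Equiv.Perm X, σ ∈ G ∧ ∃ u : X →₀ ℕ, w = u + Finsupp.mapDomain (⇑σ) v) := by
  intro f
  exact stmt14_aux G hNoeth f
end

section
/- Let K be a field, X a set, G a group of permutations of X, ≤ a term ordering of X^⋄, and I a G-invariant ideal of R = K[X]. For σ ∈ G, let ≤_σ be the term ordering defined by v ≤_σ w iff σv ≤ σw, and let lm_σ(f) denote the leading monomial of f with respect to ≤_σ. If B is a Gröbner basis for I (with respect to ≤), then for every σ ∈ G and every nonzero f ∈ I there exists h ∈ GB = {τg : τ ∈ G, g ∈ B} with lm_σ(h) dividing lm_σ(f); that is, GB is a universal G-Gröbner basis for I. -/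
/-!
Renaming by `σ` turns `≤_σ`-leading monomials of `f` into `≤`-leading monomials of `σf ∈ I`.
The Gröbner basis property gives `g ∈ B` and `π ∈ G` with `σ·lm_σ(f) = u·π(lm g)` and
`u·π(v') ≤ σ·lm_σ(f)` for all `v' ≤ lm g`; cancelling `u` shows that `π(lm g)` is the leading
monomial of `πg`. Renaming back by `σ⁻¹`, `h = σ⁻¹πg` has `lm_σ(h) = σ⁻¹π(lm g)`, which divides
`lm_σ(f) = σ⁻¹u · σ⁻¹π(lm g)`.
-/

open MvPolynomial Finsupp

section TermOrder

variable {X : Type*} {r : (X →₀ ℕ) → (X →₀ ℕ) → Prop}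

theorem IsTermOrder.add_le_add_left (hr : IsTermOrder r) (u : X →₀ ℕ) :
    ∀ {v w : X →₀ ℕ}, r v w → r (u + v) (u + w) := by
  induction u using Finsupp.induction_linear with
  | zero => intro v w h; simpa using h
  | add f g hf hg => intro v w h; simpa only [add_assoc] using hf (hg h)
  | single x n =>
    induction n with
    | zero => intro v w h; simpa using h
    | succ n ih =>
      intro v w h
      rw [add_comm n 1, single_add, add_assoc, add_assoc]
      exact hr.2.2.2 _ _ x (ih h)

theorem IsTermOrder.le_of_add_le_add_left (hr : IsTermOrder r) {u v w : X →₀ ℕ}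
    (h : r (u + v) (u + w)) : r v w := by
  have := hr.1
  rcases total_of r v w with hvw | hwv
  · exact hvw
  · obtain rfl : v = w := add_left_cancel (antisymm h (hr.add_le_add_left u hwv))
    exact refl v

end TermOrder

theorem Finsupp.mapDomain_perm_mul {X M : Type*} [AddCommMonoid M] (σ τ : Equiv.Perm X)
    (v : X →₀ M) : mapDomain (⇑(σ * τ)) v = mapDomain σ (mapDomain τ v) := by
  rw [Equiv.Perm.coe_mul, mapDomain_comp]

def IsLeadingMonomial {X K : Type*} [CommSemiring K] (r : (X →₀ ℕ) → (X →₀ ℕ) → Prop)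
    (f : MvPolynomial X K) (v : X →₀ ℕ) : Prop :=
  v ∈ f.support ∧ ∀ m ∈ f.support, r m v

theorem isLeadingMonomial_rename_iff {X Y K : Type*} [CommSemiring K]
    {r : (Y →₀ ℕ) → (Y →₀ ℕ) → Prop} {e : X → Y} (he : Function.Injective e)
    {f : MvPolynomial X K} {v : X →₀ ℕ} :
    IsLeadingMonomial r (rename e f) (mapDomain e v) ↔
      IsLeadingMonomial (mapDomain e ⁻¹'o r) f v := by
  classical
  simp only [IsLeadingMonomial, support_rename_of_injective he, Finset.mem_image,
    (mapDomain_injective he).eq_iff, exists_eq_right, forall_exists_index, and_imp,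
    forall_apply_eq_imp_iff₂, Order.Preimage]

theorem isLeadingMonomial_perm_mul_iff {X K : Type*} [CommSemiring K]
    {r : (X →₀ ℕ) → (X →₀ ℕ) → Prop} (σ τ : Equiv.Perm X) {f : MvPolynomial X K}
    {v : X →₀ ℕ} :
    IsLeadingMonomial (mapDomain σ ⁻¹'o r) (rename τ f) (mapDomain τ v) ↔
      IsLeadingMonomial (mapDomain (⇑(σ * τ)) ⁻¹'o r) f v := by
  have hpre : mapDomain τ ⁻¹'o (mapDomain σ ⁻¹'o r) = mapDomain (⇑(σ * τ)) ⁻¹'o r := by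
    ext a b
    simp only [Order.Preimage, mapDomain_perm_mul]
  rw [isLeadingMonomial_rename_iff τ.injective, hpre]

theorem IsTermOrder.isLeadingMonomial_preimage_of_cancel {X K : Type*} [CommSemiring K]
    {r : (X →₀ ℕ) → (X →₀ ℕ) → Prop} (hr : IsTermOrder r) {g : MvPolynomial X K}
    {vg u w : X →₀ ℕ} {π : Equiv.Perm X} (hg : IsLeadingMonomial r g vg)
    (hw : w = u + mapDomain π vg) (hcancel : ∀ v, r v vg → r (u + mapDomain π v) w) :
    IsLeadingMonomial (mapDomain π ⁻¹'o r) g vg :=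
  ⟨hg.1, fun m hm => hr.le_of_add_le_add_left (hw ▸ hcancel m (hg.2 m hm))⟩

theorem stmt15_general {K : Type*} [Field K] {X : Type*}
    (G : Subgroup (Equiv.Perm X)) (r : (X →₀ ℕ) → (X →₀ ℕ) → Prop)
    (hr : IsTermOrder r)
    (I : Ideal (MvPolynomial X K))
    (hI : ∀ σ ∈ G, ∀ f ∈ I, MvPolynomial.rename (⇑σ) f ∈ I)
    (B : Set (MvPolynomial X K))
    (hGB : ∀ f ∈ I, f ≠ 0 → ∀ vf ∈ f.support, (∀ m ∈ f.support, r m vf) →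
      ∃ g ∈ B, ∃ vg ∈ MvPolynomial.support g,
        (∀ m ∈ MvPolynomial.support g, r m vg) ∧ SymCancel G r vg vf) :
    ∀ σ : Equiv.Perm X, σ ∈ G → ∀ f ∈ I, f ≠ 0 → ∀ vf ∈ f.support,
      (∀ m ∈ f.support,
        r (Finsupp.mapDomain (⇑σ) m) (Finsupp.mapDomain (⇑σ) vf)) →
      ∃ τ : Equiv.Perm X, τ ∈ G ∧ ∃ g ∈ B,
        ∃ vh ∈ (MvPolynomial.rename (⇑τ) g).support,
          (∀ m ∈ (MvPolynomial.rename (⇑τ) g).support,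
            r (Finsupp.mapDomain (⇑σ) m) (Finsupp.mapDomain (⇑σ) vh)) ∧
          ∃ u : X →₀ ℕ, vf = u + vh := by
  intro σ hσ f hf hf0 vf hvf hlm
  have hσf : IsLeadingMonomial r (rename σ f) (mapDomain σ vf) :=
    (isLeadingMonomial_rename_iff σ.injective).2 ⟨hvf, hlm⟩
  have hσf0 : rename σ f ≠ 0 := (map_ne_zero_iff _ (rename_injective _ σ.injective)).2 hf0
  obtain ⟨g, hgB, vg, hvg, hlmg, -, π, hπ, u, hdiv, hcancel⟩ :=
    hGB _ (hI σ hσ f hf) hσf0 _ hσf.1 hσf.2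
  have hπg := hr.isLeadingMonomial_preimage_of_cancel ⟨hvg, hlmg⟩ hdiv hcancel
  obtain ⟨hmem, hmax⟩ : IsLeadingMonomial (mapDomain σ ⁻¹'o r) (rename (⇑(σ⁻¹ * π)) g)
      (mapDomain (⇑(σ⁻¹ * π)) vg) := by
    rwa [isLeadingMonomial_perm_mul_iff, mul_inv_cancel_left]
  refine ⟨σ⁻¹ * π, mul_mem (inv_mem hσ) hπ, g, hgB, _, hmem, hmax, mapDomain (⇑σ⁻¹) u, ?_⟩
  calc vf = mapDomain (⇑(σ⁻¹ * σ)) vf := by rw [inv_mul_cancel, Equiv.Perm.coe_one, mapDomain_id]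
    _ = mapDomain (⇑σ⁻¹) (u + mapDomain π vg) := by rw [mapDomain_perm_mul, hdiv]
    _ = mapDomain (⇑σ⁻¹) u + mapDomain (⇑(σ⁻¹ * π)) vg := by
      rw [mapDomain_add, mapDomain_perm_mul]

/-- Let `K` be a field, `r` a term ordering, `I` a `G`-invariant ideal
of `K[X]` and `B` a Gröbner basis for `I` (field case: every nonzero `f ∈ I` has
`lm g ⪯ lm f` for some `g ∈ B`).  Then `GB = {τg : τ ∈ G, g ∈ B}` is a universal
`G`-Gröbner basis for `I`: for every `σ ∈ G` and nonzero `f ∈ I` some `h ∈ GB` has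
`lm_σ(h) ∣ lm_σ(f)`, where `lm_σ` is the leading monomial for the order
`v ≤_σ w ↔ σv ≤ σw`. -/
theorem stmt15 {K : Type*} [Field K] {X : Type*}
    (G : Subgroup (Equiv.Perm X)) (r : (X →₀ ℕ) → (X →₀ ℕ) → Prop)
    (hr : IsTermOrder r)
    (I : Ideal (MvPolynomial X K))
    (hI : ∀ σ ∈ G, ∀ f ∈ I, MvPolynomial.rename (⇑σ) f ∈ I)
    (B : Set (MvPolynomial X K)) (hBI : B ⊆ (I : Set (MvPolynomial X K)))
    (hB0 : ∀ g ∈ B, g ≠ 0)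
    (hGB : ∀ f ∈ I, f ≠ 0 → ∀ vf ∈ f.support, (∀ m ∈ f.support, r m vf) →
      ∃ g ∈ B, ∃ vg ∈ MvPolynomial.support g,
        (∀ m ∈ MvPolynomial.support g, r m vg) ∧ SymCancel G r vg vf) :
    ∀ σ : Equiv.Perm X, σ ∈ G → ∀ f ∈ I, f ≠ 0 → ∀ vf ∈ f.support,
      (∀ m ∈ f.support,
        r (Finsupp.mapDomain (⇑σ) m) (Finsupp.mapDomain (⇑σ) vf)) →
      ∃ τ : Equiv.Perm X, τ ∈ G ∧ ∃ g ∈ B,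
        ∃ vh ∈ (MvPolynomial.rename (⇑τ) g).support,
          (∀ m ∈ (MvPolynomial.rename (⇑τ) g).support,
            r (Finsupp.mapDomain (⇑σ) m) (Finsupp.mapDomain (⇑σ) vh)) ∧
          ∃ u : X →₀ ℕ, vf = u + vh :=
  stmt15_general G r hr I hI B hGB
end

section
/- Let A be a commutative Noetherian ring and, for each positive integer n, let R_n = A[x_1,…,x_n] ⊆ R_{n+1}, with 𝔖_m acting on R_m by permuting variables. Let (I_n)_{n≥1} be a symmetrization invariant chain: each I_n is an ideal of R_n, I_n ⊆ I_{n+1}, and L_m(I_n) ⊆ I_m for all n ≤ m. Then the chain stabilizes modulo the symmetric group: there exists a positive integer N such that L_m(I_n) = I_m for all m ≥ n > N. -/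
/-- The `m`-symmetrization `L_m(B)` of a set `B ⊆ R_n = A[x_1,…,x_n]` (for `n ≤ m`):
the ideal of `R_m = A[x_1,…,x_m]` generated by `{σg : σ ∈ 𝔖_m, g ∈ B}`. -/
noncomputable def Lsym {A : Type*} [CommRing A] {n m : ℕ} (h : n ≤ m)
    (B : Set (MvPolynomial (Fin n) A)) : Ideal (MvPolynomial (Fin m) A) :=
  Ideal.span {p : MvPolynomial (Fin m) A | ∃ σ : Equiv.Perm (Fin m), ∃ g ∈ B,
    p = MvPolynomial.rename (⇑σ) (MvPolynomial.rename (Fin.castLE h) g)}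

/-!
If the chain does not stabilize, there are gaps `L_{m_k}(I_{n_k}) ⊊ I_{m_k}` with
`n₀ ≤ m₀ < n₁ ≤ m₁ < ⋯`; in each pick `f_k` in the gap with lexicographically least
leading monomial `u_k`. Higman's lemma for the exponent vectors `u_k`, combined with the
ascending chain condition in `A`, makes the leading coefficient of some `f_k` an
`A`-combination of those of earlier `f_i` whose exponent vector embeds into `u_k` along an
order embedding `Fin m_i ↪o Fin m_k`. As `m_i ≤ n_k`, the renamed `f_i` lie in
`L_{m_k}(I_{n_k})`, and the lexicographic order is preserved by order-preserving renamings,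
so subtracting suitable monomial multiples of them from `f_k` cancels its leading term and
leaves an element of the gap with smaller leading monomial.
-/

open MvPolynomial MonomialOrder

namespace Finsupp

theorem mapDomain_le_iff {σ τ N : Type*} [AddCommMonoid N] [PartialOrder N]
    [CanonicallyOrderedAdd N] {e : σ → τ} (he : Function.Injective e) {u : σ →₀ N}
    {v : τ →₀ N} : u.mapDomain e ≤ v ↔ ∀ i, u i ≤ v (e i) := by
  refine ⟨fun h i => by simpa [mapDomain_apply he] using h (e i), fun h j => ?_⟩
  by_cases hj : j ∈ Set.range e
  · obtain ⟨i, rfl⟩ := hj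
    simpa [mapDomain_apply he] using h i
  · simp [mapDomain_of_notMem_range _ _ hj]

variable {σ τ N : Type*} [LinearOrder σ] [LinearOrder τ] [AddCommMonoid N]

theorem toLex_mapDomain_lt_toLex_mapDomain [LT N] (e : σ ↪o τ) {u v : σ →₀ N}
    (h : toLex u < toLex v) : toLex (u.mapDomain e) < toLex (v.mapDomain e) := by
  obtain ⟨i, hlt, hi⟩ := Lex.lt_iff.1 h
  refine Lex.lt_iff.2 ⟨e i, fun j hj => ?_, by simpa [mapDomain_apply e.injective] using hi⟩
  by_cases hj' : j ∈ Set.range e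
  · obtain ⟨k, rfl⟩ := hj'
    simpa [mapDomain_apply e.injective] using hlt k (e.lt_iff_lt.1 hj)
  · simp [mapDomain_of_notMem_range _ _ hj']

theorem toLex_mapDomain_le_toLex_mapDomain [PartialOrder N] (e : σ ↪o τ) {u v : σ →₀ N}
    (h : toLex u ≤ toLex v) : toLex (u.mapDomain e) ≤ toLex (v.mapDomain e) := by
  rcases h.lt_or_eq with h | h
  · exact (toLex_mapDomain_lt_toLex_mapDomain e h).le
  · rw [toLex_inj.1 h]

end Finsupp

namespace MonomialOrder

section Lex

variable {σ τ R : Type*} [LinearOrder σ] [WellFoundedGT σ] [LinearOrder τ] [WellFoundedGT τ]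
  [CommSemiring R]

theorem lex_degree_rename (e : σ ↪o τ) (f : MvPolynomial σ R) :
    lex.degree (rename e f) = (lex.degree f).mapDomain e := by
  classical
  rcases eq_or_ne f 0 with rfl | hf
  · simp
  apply lex.toSyn.injective
  apply le_antisymm
  · rw [lex.degree_le_iff, support_rename_of_injective e.injective]
    intro c hc
    obtain ⟨d, hd, rfl⟩ := Finset.mem_image.1 hc
    exact Finsupp.toLex_mapDomain_le_toLex_mapDomain e (lex.le_degree hd)
  · refine lex.le_degree ?_
    rw [support_rename_of_injective e.injective]
    exact Finset.mem_image_of_mem _ (lex.degree_mem_support hf)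

theorem lex_leadingCoeff_rename (e : σ ↪o τ) (f : MvPolynomial σ R) :
    lex.leadingCoeff (rename e f) = lex.leadingCoeff f := by
  rw [leadingCoeff, lex_degree_rename, coeff_rename_mapDomain _ e.injective, leadingCoeff]

end Lex

variable {σ R : Type*} (m : MonomialOrder σ)

theorem degree_monomial_tsub_mul_le [CommSemiring R] {g : MvPolynomial σ R} {u : σ →₀ ℕ}
    (h : m.degree g ≤ u) (c : R) : m.degree (monomial (u - m.degree g) c * g) ≼[m] u := by
  have hmul := m.degree_mul_le (f := monomial (u - m.degree g) c) (g := g)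
  have hmon := m.degree_monomial_le (d := u - m.degree g) c
  rw [map_add] at hmul
  have hu : m.toSyn (u - m.degree g) + m.toSyn (m.degree g) = m.toSyn u := by
    rw [← map_add, tsub_add_cancel_of_le h]
  exact hmul.trans (hu ▸ add_le_add hmon le_rfl)

theorem coeff_monomial_tsub_mul [CommSemiring R] {g : MvPolynomial σ R} {u : σ →₀ ℕ}
    (h : m.degree g ≤ u) (c : R) :
    (monomial (u - m.degree g) c * g).coeff u = c * m.leadingCoeff g := by
  have := coeff_monomial_mul (m.degree g) (u - m.degree g) c g
  rwa [tsub_add_cancel_of_le h] at this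

theorem degree_sub_lt_of_coeff_degree_eq [CommRing R] {f g : MvPolynomial σ R} (hfg : f ≠ g)
    (hg : m.degree g ≼[m] m.degree f) (hcoeff : g.coeff (m.degree f) = m.leadingCoeff f) :
    m.degree (f - g) ≺[m] m.degree f := by
  classical
  have hmem := m.degree_mem_support (sub_ne_zero.2 hfg)
  have hle : m.degree (f - g) ≼[m] m.degree f := by
    rcases Finset.mem_union.1 (support_sub σ f g hmem) with hf | hg'
    · exact m.le_degree hf
    · exact (m.le_degree hg').trans hg
  refine lt_of_le_of_ne hle fun heq => ?_
  rw [mem_support_iff, m.toSyn.injective heq, coeff_sub, hcoeff, leadingCoeff, sub_self] at hmem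
  exact hmem rfl

end MonomialOrder

theorem exists_mem_span_of_partiallyWellOrderedOn {α R : Type*} [CommSemiring R]
    [IsNoetherianRing R] {r : α → α → Prop} [IsPreorder α r]
    (hr : (Set.univ : Set α).PartiallyWellOrderedOn r) (a : ℕ → R) (x : ℕ → α) :
    ∃ k, a k ∈ Ideal.span (Set.range fun i : {i : Fin k // r (x i) (x k)} => a i) := by
  obtain ⟨g, hg⟩ := hr.exists_monotone_subseq (f := x) fun _ => trivial
  let T : ℕ →o Ideal R := ⟨fun j => Ideal.span (Set.range fun i : Fin j => a (g i)),
    fun _ _ hj => Ideal.span_mono (Set.range_subset_iff.2 fun i => ⟨Fin.castLE hj i, rfl⟩)⟩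
  obtain ⟨j, hj⟩ := monotone_stabilizes_iff_noetherian.2 ‹IsNoetherianRing R› T
  have hmem : a (g j) ∈ T (j + 1) := Ideal.subset_span ⟨Fin.last j, rfl⟩
  rw [← hj (j + 1) j.le_succ] at hmem
  refine ⟨g j, Ideal.span_mono (Set.range_subset_iff.2 fun i => ?_) hmem⟩
  exact ⟨⟨⟨g i, g.strictMono i.2⟩, hg i j i.2.le⟩, rfl⟩

theorem List.exists_orderEmbedding_of_sublistForall₂_ofFn {α β : Type*} {r : α → β → Prop}
    {p q : ℕ} {u : Fin p → α} {v : Fin q → β} (h : SublistForall₂ r (ofFn u) (ofFn v)) :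
    ∃ e : Fin p ↪o Fin q, ∀ i, r (u i) (v (e i)) := by
  obtain ⟨l, hl, hsub⟩ := sublistForall₂_iff.1 h
  obtain ⟨f, hf⟩ := sublist_iff_exists_fin_orderEmbedding_get_eq.1 hsub
  have hlen : l.length = p := hl.length_eq.symm.trans (length_ofFn)
  refine ⟨(Fin.castOrderIso hlen.symm).toOrderEmbedding.trans
    (f.trans (Fin.castOrderIso length_ofFn).toOrderEmbedding), fun i => ?_⟩
  have h1 := hl.get (i := i) (by simp) (by omega)
  have h2 := hf (Fin.cast hlen.symm i)
  simp only [get_eq_getElem, List.getElem_ofFn, Fin.val_cast] at h1 h2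
  rw [h2] at h1
  exact h1

instance List.SublistForall₂.isPreorder {α : Type*} {r : α → α → Prop} [IsPreorder α r] :
    IsPreorder (List α) (List.SublistForall₂ r) := {}

theorem exists_increasing_intervals_of_forall_exists_gt {P : ℕ → ℕ → Prop}
    (hP : ∀ N, ∃ n m, N < n ∧ n ≤ m ∧ P n m) :
    ∃ n m : ℕ → ℕ,
      (∀ k, n k ≤ m k ∧ P (n k) (m k)) ∧ ∀ i k, i < k → m i < n k := by
  choose n m hNn hnm hP using hP
  let s : ℕ → ℕ := fun k => m^[k] 0
  have hs_succ (k : ℕ) : s (k + 1) = m (s k) := Function.iterate_succ_apply' m k 0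
  have hs : StrictMono s := strictMono_nat_of_lt_succ fun k =>
    hs_succ k ▸ (hNn _).trans_le (hnm _)
  refine ⟨n ∘ s, m ∘ s, fun k => ⟨hnm _, hP _⟩, fun i k hik => ?_⟩
  calc m (s i) = s (i + 1) := (hs_succ i).symm
    _ ≤ s k := hs.monotone hik
    _ < n (s k) := hNn _

section SymmetrizationInvariant

variable {A : Type*} [CommRing A]

def IsSymmetrizationInvariant (I : ∀ n : ℕ, Ideal (MvPolynomial (Fin n) A)) : Prop :=
  ∀ (n m : ℕ) (h : n ≤ m), Lsym h (I n : Set (MvPolynomial (Fin n) A)) ≤ I m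

variable {I : ∀ n : ℕ, Ideal (MvPolynomial (Fin n) A)}

theorem IsSymmetrizationInvariant.rename_mem_Lsym (hI : IsSymmetrizationInvariant I)
    {p n m : ℕ} (hpn : p ≤ n) (hnm : n ≤ m) {e : Fin p → Fin m} (he : Function.Injective e)
    {g : MvPolynomial (Fin p) A} (hg : g ∈ I p) :
    rename e g ∈ Lsym hnm (I n : Set (MvPolynomial (Fin n) A)) := by
  obtain ⟨τ, hτ⟩ := Equiv.Perm.exists_extending_pair (Fin.castLE hnm ∘ Fin.castLE hpn) e
    ((Fin.castLE_injective _).comp (Fin.castLE_injective _)) he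
  have hg' : rename (Fin.castLE hpn) g ∈ I n :=
    hI p n hpn (Ideal.subset_span ⟨1, g, hg, by simp⟩)
  refine Ideal.subset_span ⟨τ, _, hg', ?_⟩
  rw [rename_rename, rename_rename,
    show (τ ∘ Fin.castLE hnm) ∘ Fin.castLE hpn = e from funext hτ]

theorem IsSymmetrizationInvariant.exists_lex_degree_lt [IsNoetherianRing A]
    (hI : IsSymmetrizationInvariant I) {n m : ℕ → ℕ} (hnm : ∀ k, n k ≤ m k)
    (hmn : ∀ i k, i < k → m i ≤ n k) (f : ∀ k, MvPolynomial (Fin (m k)) A)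
    (hfI : ∀ k, f k ∈ I (m k))
    (hfL : ∀ k, f k ∉ Lsym (hnm k) (I (n k) : Set (MvPolynomial (Fin (n k)) A))) :
    ∃ k, ∃ g ∈ I (m k), g ∉ Lsym (hnm k) (I (n k) : Set (MvPolynomial (Fin (n k)) A)) ∧
      lex.degree g ≺[lex] lex.degree (f k) := by
  classical
  have higman :
      (Set.univ : Set (List ℕ)).PartiallyWellOrderedOn (List.SublistForall₂ (· ≤ ·)) := by
    simpa using
      (Set.IsPWO.of_linearOrder (Set.univ : Set ℕ)).partiallyWellOrderedOn_sublistForall₂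
  obtain ⟨k, hk⟩ := exists_mem_span_of_partiallyWellOrderedOn higman
    (fun k => lex.leadingCoeff (f k)) (fun k => List.ofFn (lex.degree (f k)))
  obtain ⟨c, hc⟩ := Ideal.mem_span_range_iff_exists_fun.1 hk
  choose e he using fun j : {i : Fin k // List.SublistForall₂ (· ≤ ·)
      (List.ofFn (lex.degree (f i))) (List.ofFn (lex.degree (f k)))} =>
    List.exists_orderEmbedding_of_sublistForall₂_ofFn j.2
  let G j : MvPolynomial (Fin (m k)) A := rename (e j) (f j)
  have hGdeg j : lex.degree (G j) ≤ lex.degree (f k) := by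
    rw [lex_degree_rename]
    exact (Finsupp.mapDomain_le_iff (e j).injective).2 (he j)
  let g := ∑ j, monomial (lex.degree (f k) - lex.degree (G j)) (c j) * G j
  have hgL : g ∈ Lsym (hnm k) (I (n k) : Set (MvPolynomial (Fin (n k)) A)) :=
    sum_mem fun j _ => Ideal.mul_mem_left _ _
      (hI.rename_mem_Lsym (hmn _ _ j.1.2) (hnm k) (e j).injective (hfI j))
  refine ⟨k, f k - g, sub_mem (hfI k) (hI _ _ _ hgL),
    fun h => hfL k (by simpa using add_mem h hgL),
    lex.degree_sub_lt_of_coeff_degree_eq (fun h => hfL k (h ▸ hgL)) ?_ ?_⟩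
  · exact degree_sum_le.trans
      (Finset.sup_le fun j _ => lex.degree_monomial_tsub_mul_le (hGdeg j) _)
  · simp only [g, coeff_sum, lex.coeff_monomial_tsub_mul (hGdeg _), G, lex_leadingCoeff_rename]
    exact hc

end SymmetrizationInvariant

theorem stmt17_general {A : Type*} [CommRing A] [IsNoetherianRing A]
    (I : ∀ n : ℕ, Ideal (MvPolynomial (Fin n) A))
    (hsym : ∀ (n m : ℕ) (h : n ≤ m),
      Lsym h ((I n : Ideal (MvPolynomial (Fin n) A)) :
        Set (MvPolynomial (Fin n) A)) ≤ I m) :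
    ∃ N : ℕ, 0 < N ∧ ∀ (n m : ℕ) (h : n ≤ m), N < n →
      Lsym h ((I n : Ideal (MvPolynomial (Fin n) A)) :
        Set (MvPolynomial (Fin n) A)) = I m := by
  by_contra hcon
  push Not at hcon
  obtain ⟨n, m, hgap, hmn⟩ := exists_increasing_intervals_of_forall_exists_gt
    (P := fun n m => ∃ h : n ≤ m, Lsym h (I n : Set (MvPolynomial (Fin n) A)) < I m) fun N => by
      obtain ⟨n, m, h, hn, hne⟩ := hcon (N + 1) N.succ_pos
      exact ⟨n, m, by omega, h, h, lt_of_le_of_ne (hsym n m h) hne⟩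
  have hnm k := (hgap k).1
  have hne k : ((I (m k) : Set (MvPolynomial (Fin (m k)) A)) \
      Lsym (hnm k) (I (n k) : Set (MvPolynomial (Fin (n k)) A))).Nonempty :=
    SetLike.exists_of_lt (hgap k).2.2
  choose f hf hmin using fun k => (wellFounded_lt.onFun
    (f := fun f : MvPolynomial (Fin (m k)) A => lex.toSyn (lex.degree f))).has_min _ (hne k)
  obtain ⟨k, g, hgI, hgL, hlt⟩ := IsSymmetrizationInvariant.exists_lex_degree_lt hsym hnm
    (fun i k hik => (hmn i k hik).le) f (fun k => (hf k).1) (fun k => (hf k).2)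
  exact hmin k g ⟨hgI, hgL⟩ hlt

/-- Let `A` be commutative Noetherian and `(I_n)` a symmetrization
invariant chain: `I_n` an ideal of `R_n = A[x_1,…,x_n]`, `I_n ⊆ I_{n+1}` and
`L_m(I_n) ⊆ I_m` for `n ≤ m`.  Then the chain stabilizes modulo the symmetric group:
there is a positive integer `N` with `L_m(I_n) = I_m` for all `m ≥ n > N`. -/
theorem stmt17 {A : Type*} [CommRing A] [IsNoetherianRing A]
    (I : ∀ n : ℕ, Ideal (MvPolynomial (Fin n) A))
    (hchain : ∀ n : ℕ, ∀ f ∈ I n,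
      MvPolynomial.rename (Fin.castLE (Nat.le_succ n)) f ∈ I (n + 1))
    (hsym : ∀ (n m : ℕ) (h : n ≤ m),
      Lsym h ((I n : Ideal (MvPolynomial (Fin n) A)) :
        Set (MvPolynomial (Fin n) A)) ≤ I m) :
    ∃ N : ℕ, 0 < N ∧ ∀ (n m : ℕ) (h : n ≤ m), N < n →
      Lsym h ((I n : Ideal (MvPolynomial (Fin n) A)) :
        Set (MvPolynomial (Fin n) A)) = I m :=
  stmt17_general I hsym
end

section
/- Let K be a field, k ≥ 2 an integer, Ω = {1, 2, 3, …}, and let ⟨Ω⟩^k denote the set of k-tuples of pairwise distinct elements of Ω. Let R = K[{x_u}_{u ∈ ⟨Ω⟩^k}] be the polynomial ring with one indeterminate x_u for each u ∈ ⟨Ω⟩^k, on which the group 𝔖_∞ of finitary permutations of Ω acts by σ·x_{(u_1,…,u_k)} = x_{(σ(u_1),…,σ(u_k))}. Then R is not Noetherian as an R[𝔖_∞]-module: there exists a 𝔖_∞-invariant ideal I of R such that for no finite set B ⊆ I does I equal the ideal of R generated by {σb : σ ∈ 𝔖_∞, b ∈ B}. -/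
/-!
The ideal `I` is spanned by the *cycle monomials* `x_{t_0} ⋯ x_{t_{n-1}}` (`n ≥ 1`) whose
variables, read through their first two coordinates `(t_i 0, t_i 1)`, are the edges of a
directed `n`-cycle on `Ω`. Permutations map cycle monomials to cycle monomials of the same
length, so `I` is invariant. If the translates of finitely many `b ∈ I` of total degree `≤ D`
generated `I`, every cycle monomial would be divisible by one of length `≤ D`. But if a cycle
monomial of length `n'` divides one of length `n`, then each edge of the small cycle is an edge
of the big one, so the small cycle runs around the whole big one and `n ≤ n'`.
-/

/-- The action of a permutation `σ` of `ℕ` on the injective `k`-tuples of natural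
numbers (indexing the indeterminates `x_u`, `u ∈ ⟨Ω⟩^k`). -/
def permTuple {k : ℕ} (σ : Equiv.Perm ℕ) :
    {u : Fin k → ℕ // Function.Injective u} → {u : Fin k → ℕ // Function.Injective u} :=
  fun u => ⟨⇑σ ∘ u.1, σ.injective.comp u.2⟩

open Function MvPolynomial

theorem Equiv.Perm.IsCycle.surjective_of_semiconj {α β : Type*} [Nonempty α] [Finite β]
    {g : α → α} {h : Equiv.Perm β} (hh : h.IsCycle) (hfix : ∀ y, h y ≠ y) {f : α → β}
    (hf : Semiconj f g h) : Surjective f := by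
  intro y
  obtain ⟨x⟩ := ‹Nonempty α›
  obtain ⟨i, hi⟩ := hh.exists_pow_eq (hfix (f x)) (hfix y)
  exact ⟨g^[i] x, by rw [(hf.iterate_right i).eq, ← Equiv.Perm.coe_pow, hi]⟩

namespace MvPolynomial

variable {σ τ R : Type*} [CommSemiring R]

theorem rename_mem_span_monomial {f : σ → τ} {S : Set (σ →₀ ℕ)} {T : Set (τ →₀ ℕ)}
    (hST : ∀ s ∈ S, s.mapDomain f ∈ T) {p : MvPolynomial σ R}
    (hp : p ∈ Ideal.span ((fun s => monomial s (1 : R)) '' S)) :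
    rename f p ∈ Ideal.span ((fun s => monomial s (1 : R)) '' T) := by
  refine Ideal.map_le_iff_le_comap.mpr ?_ (Ideal.mem_map_of_mem (rename f) hp)
  rw [Ideal.span_le]
  rintro _ ⟨s, hs, rfl⟩
  exact Ideal.subset_span ⟨_, hST s hs, (rename_monomial f s 1).symm⟩

theorem mem_span_monomial_degree_le_of_totalDegree_le {S : Set (σ →₀ ℕ)} {p : MvPolynomial σ R}
    {D : ℕ} (hp : p ∈ Ideal.span ((fun s => monomial s (1 : R)) '' S)) (hD : p.totalDegree ≤ D) :
    p ∈ Ideal.span ((fun s => monomial s (1 : R)) '' {s ∈ S | s.degree ≤ D}) := by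
  rw [mem_ideal_span_monomial_image] at hp ⊢
  intro xi hxi
  obtain ⟨si, hsi, hle⟩ := hp xi hxi
  exact ⟨si, ⟨hsi, (Finsupp.degree_mono hle).trans ((le_totalDegree hxi).trans hD)⟩, hle⟩

end MvPolynomial

abbrev InjTuple (k : ℕ) := {u : Fin k → ℕ // Injective u}

/-- `m` is the exponent of `x_{t_0} ⋯ x_{t_{n-1}}`, where each `t_i` begins with `(c_i, c_{i+1})`
for distinct `c_0, …, c_{n-1}` (indices mod `n`). -/
def IsCycleMonomial {k : ℕ} (n : ℕ) (m : InjTuple (k + 2) →₀ ℕ) : Prop :=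
  ∃ c : Fin n → ℕ, Injective c ∧ ∃ t : Fin n → InjTuple (k + 2),
    (∀ i, (t i).1 0 = c i ∧ (t i).1 1 = c (finRotate n i)) ∧
    Finsupp.toMultiset m = Finset.univ.val.map t

namespace IsCycleMonomial

variable {k n n' : ℕ} {m m' : InjTuple (k + 2) →₀ ℕ}

theorem degree_eq (h : IsCycleMonomial n m) : m.degree = n := by
  obtain ⟨-, -, t, -, ht⟩ := h
  have := Finsupp.card_toMultiset m
  rw [ht] at this
  simpa [Finsupp.degree_apply, Finsupp.sum] using this.symm

theorem mapDomain_permTuple (h : IsCycleMonomial n m) (σ : Equiv.Perm ℕ) :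
    IsCycleMonomial n (m.mapDomain (permTuple σ)) := by
  obtain ⟨c, hc, t, ht, hm⟩ := h
  refine ⟨σ ∘ c, σ.injective.comp hc, permTuple σ ∘ t, fun i => ?_, ?_⟩
  · simp [permTuple, ht i]
  · rw [← Finsupp.toMultiset_map, hm, Multiset.map_map]

theorem length_le_of_le (h : IsCycleMonomial n m) (h' : IsCycleMonomial n' m') (hn' : n' ≠ 0)
    (hle : m' ≤ m) : n ≤ n' := by
  obtain ⟨c, hc, t, ht, hm⟩ := h
  obtain ⟨c', -, t', ht', hm'⟩ := h'
  have hmem : ∀ j, ∃ i, t i = t' j := by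
    intro j
    have : t' j ∈ Finsupp.toMultiset m := by
      rw [Finsupp.mem_toMultiset]
      refine Finsupp.support_mono hle ?_
      rw [← Finsupp.mem_toMultiset, hm']
      exact Multiset.mem_map_of_mem t' (Finset.mem_univ_val j)
    simpa [hm] using this
  choose f hf using hmem
  have hcf : ∀ j, c (f j) = c' j := fun j => by rw [← (ht _).1, hf, (ht' j).1]
  have hsemi : Semiconj f (finRotate n') (finRotate n) := fun j =>
    hc (by rw [hcf, ← (ht' j).2, ← hf, (ht _).2])
  rcases n with _ | _ | n
  · omega
  · omega
  · have : NeZero n' := ⟨hn'⟩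
    simpa using Fintype.card_le_of_surjective f
      (isCycle_finRotate.surjective_of_semiconj (by simp) hsemi)

end IsCycleMonomial

theorem exists_isCycleMonomial (k n : ℕ) :
    ∃ m : InjTuple (k + 2) →₀ ℕ, IsCycleMonomial (n + 2) m := by
  have hfix : ∀ i : Fin (n + 2), finRotate (n + 2) i ≠ i := by simp
  let t : Fin (n + 2) → InjTuple (k + 2) := fun i =>
    ⟨Fin.cons (i : ℕ) (Fin.cons (finRotate (n + 2) i : ℕ) fun j : Fin k => n + 2 + j), by
      refine Fin.cons_injective_iff.mpr ⟨?_, Fin.cons_injective_iff.mpr ⟨?_, ?_⟩⟩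
      · simp only [Set.mem_range, Fin.exists_fin_succ, Fin.cons_zero, Fin.cons_succ, not_or,
          not_exists]
        exact ⟨fun h => hfix i (Fin.ext h), fun j => by omega⟩
      · simp only [Set.mem_range, not_exists]
        intro j
        have := (finRotate (n + 2) i).isLt
        omega
      · intro j j' h
        exact Fin.ext (by simpa using h)⟩
  refine ⟨Multiset.toFinsupp (Finset.univ.val.map t), (↑), Fin.val_injective, t,
    fun i => ⟨rfl, rfl⟩, Multiset.toFinsupp_toMultiset _⟩

/-- Let `K` be a field and `k ≥ 2`.  The polynomial ring
`R = K[{x_u}_{u ∈ ⟨Ω⟩^k}]` (one indeterminate for each injective `k`-tuple from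
`Ω = ℕ`), with the group `𝔖_∞` of finitary permutations of `Ω` acting by
`σ·x_{(u_1,…,u_k)} = x_{(σu_1,…,σu_k)}`, is not Noetherian as an `R[𝔖_∞]`-module:
there is a `𝔖_∞`-invariant ideal `I` of `R` which, for no finite `B ⊆ I`, equals the
ideal generated by `{σb : σ ∈ 𝔖_∞, b ∈ B}`. -/
theorem stmt18 {K : Type*} [Field K] (k : ℕ) (hk : 2 ≤ k) :
    ∃ I : Ideal (MvPolynomial {u : Fin k → ℕ // Function.Injective u} K),
      (∀ σ : Equiv.Perm ℕ, {x : ℕ | σ x ≠ x}.Finite →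
        ∀ f ∈ I, MvPolynomial.rename (permTuple (k := k) σ) f ∈ I) ∧
      ¬ ∃ B : Finset (MvPolynomial {u : Fin k → ℕ // Function.Injective u} K),
          ↑B ⊆ (I : Set (MvPolynomial {u : Fin k → ℕ // Function.Injective u} K)) ∧
          I = Ideal.span {p : MvPolynomial {u : Fin k → ℕ // Function.Injective u} K |
            ∃ σ : Equiv.Perm ℕ, {x : ℕ | σ x ≠ x}.Finite ∧
              ∃ b ∈ B, p = MvPolynomial.rename (permTuple (k := k) σ) b} := by
  obtain ⟨k, rfl⟩ := Nat.exists_eq_add_of_le' hk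
  let cycles : Set (InjTuple (k + 2) →₀ ℕ) := {m | ∃ n ≠ 0, IsCycleMonomial n m}
  have cycles_invariant (σ : Equiv.Perm ℕ) :
      ∀ m ∈ cycles, m.mapDomain (permTuple σ) ∈ cycles := by
    rintro m ⟨n, hn, hm⟩
    exact ⟨n, hn, hm.mapDomain_permTuple σ⟩
  refine ⟨Ideal.span ((fun m => monomial m (1 : K)) '' cycles),
    fun σ _ f hf => rename_mem_span_monomial (cycles_invariant σ) hf, ?_⟩
  rintro ⟨B, hBI, hIB⟩
  set D := B.sup totalDegree
  have hIJ : Ideal.span ((fun m => monomial m (1 : K)) '' cycles) ≤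
      Ideal.span ((fun m => monomial m (1 : K)) '' {m ∈ cycles | m.degree ≤ D}) := by
    rw [hIB, Ideal.span_le]
    rintro _ ⟨σ, -, b, hb, rfl⟩
    refine rename_mem_span_monomial ?_
      (mem_span_monomial_degree_le_of_totalDegree_le (hBI hb) (Finset.le_sup hb))
    rintro m ⟨hm, hmD⟩
    exact ⟨cycles_invariant σ m hm, (Finsupp.degree_mapDomain _ m).trans_le hmD⟩
  obtain ⟨m, hm⟩ := exists_isCycleMonomial k (D + 1)
  obtain ⟨s, ⟨⟨n, hn, hs⟩, hsD⟩, hsm⟩ := mem_ideal_span_monomial_image.mp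
    (hIJ (Ideal.subset_span (Set.mem_image_of_mem _ (⟨D + 3, by omega, hm⟩ : m ∈ cycles)))) m
    (by simp)
  have := hm.length_le_of_le hs hn hsm
  rw [hs.degree_eq] at hsD
  omega
end

section
/- Let K be a field, k ≥ 1, f ∈ K[y_1,…,y_k], and for n ≥ k let R_n = K[{x_u}_{u ∈ ⟨n⟩^k}] and let Q_n be the kernel of the K-algebra homomorphism φ_n: R_n → K[t_1,…,t_n] sending x_{(u_1,…,u_k)} to f(t_{u_1},…,t_{u_k}). Then the chain (Q_n)_{n≥k} stabilizes modulo the symmetric group if and only if there exist integers M and N such that for all n > N the ideal Q_n has a generating set consisting of polynomials each of variable size at most M. Moreover, in this case stabilization occurs with bound max(N, kM): L_m(Q_n) = Q_m for all m ≥ n > max(N, kM). -/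
/-- `⟨n⟩^k`: the ordered `k`-element subsets of `{1,…,n}`, i.e. injective `k`-tuples. -/
abbrev Inds (k n : ℕ) := {u : Fin k → Fin n // Function.Injective u}

/-- The kernel `Q_n` of the `K`-algebra homomorphism
`φ_n : R_n = K[{x_u}_{u ∈ ⟨n⟩^k}] → K[t_1,…,t_n]`, `x_{(u_1,…,u_k)} ↦
f(t_{u_1},…,t_{u_k})`. -/
noncomputable def Qker {K : Type*} [Field K] {k : ℕ} (f : MvPolynomial (Fin k) K)
    (n : ℕ) : Ideal (MvPolynomial (Inds k n) K) :=
  RingHom.ker ((MvPolynomial.aeval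
    (fun u : Inds k n => MvPolynomial.rename u.1 f) :
      MvPolynomial (Inds k n) K →ₐ[K] MvPolynomial (Fin n) K) :
        MvPolynomial (Inds k n) K →+* MvPolynomial (Fin n) K)

/-- The inclusion `⟨n⟩^k → ⟨m⟩^k` for `n ≤ m`. -/
def indsIncl {k n m : ℕ} (h : n ≤ m) : Inds k n → Inds k m :=
  fun u => ⟨Fin.castLE h ∘ u.1, (Fin.castLE_injective h).comp u.2⟩

/-- The action of `σ ∈ 𝔖_m` on `⟨m⟩^k`. -/
def permInds {k m : ℕ} (σ : Equiv.Perm (Fin m)) : Inds k m → Inds k m :=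
  fun u => ⟨⇑σ ∘ u.1, σ.injective.comp u.2⟩

/-- The `m`-symmetrization `L_m(B)` of `B ⊆ R_n = K[{x_u}_{u ∈ ⟨n⟩^k}]`, `n ≤ m`: the
ideal of `R_m` generated by `{σg : σ ∈ 𝔖_m, g ∈ B}`. -/
noncomputable def LsymInds {K : Type*} [CommRing K] {k n m : ℕ} (h : n ≤ m)
    (B : Set (MvPolynomial (Inds k n) K)) : Ideal (MvPolynomial (Inds k m) K) :=
  Ideal.span {p : MvPolynomial (Inds k m) K | ∃ σ : Equiv.Perm (Fin m), ∃ g ∈ B,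
    p = MvPolynomial.rename (permInds σ) (MvPolynomial.rename (indsIncl h) g)}

/-!
Relabelling the `t_i` by an injection `Fin n ↪ Fin m` maps `Q_n` into `Q_m`, and a polynomial
of `R_n` lies in `Q_n` iff its relabelling lies in `Q_m`. If `Q_m` is generated by polynomials
in at most `M` indeterminates, each generator involves at most `kM` of the indices `1,…,m`; for
`n ≥ kM` a permutation of `{1,…,m}` moves these into `{1,…,n}`, so every generator is `σg` with
`g ∈ Q_n`. Conversely, if `L_m(Q_n) = Q_m` for one fixed `n`, then the `σg` generate `Q_m`, and
each involves at most `|⟨n⟩^k|` indeterminates.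
-/

open MvPolynomial

section Inds

variable {k n m : ℕ}

def indsMap (ρ : Fin n ↪ Fin m) : Inds k n → Inds k m :=
  fun u => ⟨ρ ∘ u.1, ρ.injective.comp u.2⟩

lemma indsMap_injective (ρ : Fin n ↪ Fin m) : Function.Injective (indsMap (k := k) ρ) :=
  fun _ _ huv => Subtype.ext <| funext fun i => ρ.injective (congrFun (congrArg Subtype.val huv) i)

lemma indsIncl_eq_indsMap (h : n ≤ m) : indsIncl (k := k) h = indsMap (Fin.castLEEmb h) := rfl

lemma permInds_eq_indsMap (σ : Equiv.Perm (Fin m)) :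
    permInds (k := k) σ = indsMap σ.toEmbedding := rfl

lemma permInds_inv_apply_permInds (σ : Equiv.Perm (Fin m)) (u : Inds k m) :
    permInds σ⁻¹ (permInds σ u) = u :=
  Subtype.ext <| funext fun i => σ.symm_apply_apply (u.1 i)

variable {K : Type*}

noncomputable def usedIndices [CommSemiring K] (g : MvPolynomial (Inds k m) K) : Finset (Fin m) :=
  (vars g).biUnion fun u => Finset.univ.image u.1

lemma card_usedIndices_le [CommSemiring K] (g : MvPolynomial (Inds k m) K) :
    (usedIndices g).card ≤ k * (vars g).card := by
  rw [mul_comm]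
  refine Finset.card_biUnion_le_card_mul _ _ _ fun u _ => ?_
  simpa using Finset.card_image_le (s := Finset.univ) (f := u.1)

lemma usedIndices_rename_subset [CommSemiring K] (ρ : Fin m ↪ Fin n)
    (g : MvPolynomial (Inds k m) K) :
    usedIndices (rename (indsMap ρ) g) ⊆ (usedIndices g).map ρ := by
  intro x hx
  simp only [usedIndices, Finset.mem_biUnion, Finset.mem_image, Finset.mem_univ, true_and] at hx
  obtain ⟨_, hv, i, rfl⟩ := hx
  obtain ⟨u, hu, rfl⟩ := mem_vars_rename _ _ hv
  exact Finset.mem_map_of_mem _ <| Finset.mem_biUnion.2 ⟨u, hu, by simp⟩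

lemma exists_rename_indsMap_eq [CommSemiring K] (ρ : Fin n ↪ Fin m)
    (g : MvPolynomial (Inds k m) K) (hg : ∀ x ∈ usedIndices g, x ∈ Set.range ρ) :
    ∃ g₀, rename (indsMap ρ) g₀ = g := by
  refine exists_rename_eq_of_vars_subset_range _ _ (indsMap_injective ρ) fun u hu => ?_
  have hui : ∀ i, ∃ j, ρ j = u.1 i := fun i =>
    hg _ <| Finset.mem_biUnion.2 ⟨u, hu, Finset.mem_image_of_mem _ (Finset.mem_univ i)⟩
  choose w hw using hui
  exact ⟨⟨w, fun i j hij => u.2 (by rw [← hw i, ← hw j, hij])⟩, Subtype.ext (funext hw)⟩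

end Inds

lemma Finset.exists_perm_mapsTo {α : Type*} [Fintype α] [DecidableEq α] {s t : Finset α}
    (hst : s.card ≤ t.card) : ∃ σ : Equiv.Perm α, Set.MapsTo σ s t := by
  obtain ⟨t', ht't, ht'⟩ := Finset.exists_subset_card_eq hst
  let e : {x // x ∈ s} ≃ {x // x ∈ t'} :=
    Fintype.equivOfCardEq (by rw [Fintype.card_coe, Fintype.card_coe, ht'])
  exact ⟨e.extendSubtype, fun x hx => ht't (e.extendSubtype_mem x hx)⟩

section Qker

variable {K : Type*} [Field K] {k : ℕ} (f : MvPolynomial (Fin k) K) {n m : ℕ}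

lemma aeval_rename_indsMap (ρ : Fin n ↪ Fin m) (p : MvPolynomial (Inds k n) K) :
    aeval (fun u : Inds k m => rename u.1 f) (rename (indsMap ρ) p) =
      rename ρ (aeval (fun u : Inds k n => rename u.1 f) p) := by
  rw [← AlgHom.comp_apply, ← AlgHom.comp_apply]
  congr 1
  refine algHom_ext fun u => ?_
  simp [indsMap, rename_rename]

lemma rename_indsMap_mem_Qker_iff (ρ : Fin n ↪ Fin m) (p : MvPolynomial (Inds k n) K) :
    rename (indsMap ρ) p ∈ Qker f m ↔ p ∈ Qker f n := by
  change aeval _ (rename (indsMap ρ) p) = 0 ↔ aeval _ p = 0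
  rw [aeval_rename_indsMap, map_eq_zero_iff _ (rename_injective _ ρ.injective)]

lemma LsymInds_Qker_le (h : n ≤ m) : LsymInds h (Qker f n : Set _) ≤ Qker f m := by
  rw [LsymInds, Ideal.span_le]
  rintro _ ⟨σ, g, hg, rfl⟩
  rw [indsIncl_eq_indsMap, permInds_eq_indsMap, SetLike.mem_coe,
    rename_indsMap_mem_Qker_iff, rename_indsMap_mem_Qker_iff]
  exact hg

lemma mem_LsymInds_Qker (h : n ≤ m) {g : MvPolynomial (Inds k m) K} (hg : g ∈ Qker f m)
    (hcard : (usedIndices g).card ≤ n) : g ∈ LsymInds h (Qker f n : Set _) := by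
  classical
  obtain ⟨σ, hσ⟩ := Finset.exists_perm_mapsTo (s := usedIndices g)
    (t := Finset.univ.map (Fin.castLEEmb h)) (by simpa using hcard)
  obtain ⟨g₀, hg₀⟩ := exists_rename_indsMap_eq (Fin.castLEEmb h) (rename (permInds σ) g)
    fun x hx => by
      obtain ⟨y, hy, rfl⟩ := Finset.mem_map.1 (usedIndices_rename_subset σ.toEmbedding g hx)
      obtain ⟨a, -, ha⟩ := Finset.mem_map.1 (hσ hy)
      exact ⟨a, ha⟩
  have hg₀Q : g₀ ∈ Qker f n := by
    rw [← rename_indsMap_mem_Qker_iff f (Fin.castLEEmb h), hg₀, permInds_eq_indsMap,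
      rename_indsMap_mem_Qker_iff]
    exact hg
  refine Ideal.subset_span ⟨σ⁻¹, g₀, hg₀Q, ?_⟩
  rw [indsIncl_eq_indsMap, hg₀, rename_rename]
  simp only [Function.comp_def, permInds_inv_apply_permInds]
  exact (rename_id_apply g).symm

lemma LsymInds_Qker_eq_of_span_card_vars_le (h : n ≤ m) {S : Set (MvPolynomial (Inds k m) K)}
    (hS : Ideal.span S = Qker f m) {M : ℕ} (hSvars : ∀ g ∈ S, (vars g).card ≤ M)
    (hkM : k * M ≤ n) : LsymInds h (Qker f n : Set _) = Qker f m := by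
  refine le_antisymm (LsymInds_Qker_le f h) ?_
  rw [← hS, Ideal.span_le]
  intro g hgS
  refine mem_LsymInds_Qker f h (hS ▸ Ideal.subset_span hgS) ?_
  calc (usedIndices g).card ≤ k * (vars g).card := card_usedIndices_le g
    _ ≤ k * M := Nat.mul_le_mul_left k (hSvars g hgS)
    _ ≤ n := hkM

end Qker

lemma card_vars_rename_le {R σ τ : Type*} [CommSemiring R] (φ : σ → τ) (p : MvPolynomial σ R) :
    (vars (rename φ p)).card ≤ (vars p).card := by
  classical
  exact (Finset.card_le_card (vars_rename φ p)).trans Finset.card_image_le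

lemma exists_span_eq_LsymInds_card_vars_le {K : Type*} [CommRing K] {k n m : ℕ} (h : n ≤ m)
    (B : Set (MvPolynomial (Inds k n) K)) :
    ∃ S : Set (MvPolynomial (Inds k m) K), Ideal.span S = LsymInds h B ∧
      ∀ g ∈ S, (vars g).card ≤ Fintype.card (Inds k n) := by
  refine ⟨_, rfl, ?_⟩
  rintro _ ⟨σ, g, -, rfl⟩
  calc _ ≤ (vars (rename (indsIncl h) g)).card := card_vars_rename_le _ _
    _ ≤ (vars g).card := card_vars_rename_le _ _
    _ ≤ Fintype.card (Inds k n) := Finset.card_le_univ _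

theorem stmt19_general {K : Type*} [Field K] (k : ℕ)
    (f : MvPolynomial (Fin k) K) :
    ((∃ N : ℕ, ∀ (n m : ℕ) (h : n ≤ m), N < n →
        LsymInds h ((Qker f n : Ideal (MvPolynomial (Inds k n) K)) :
          Set (MvPolynomial (Inds k n) K)) = Qker f m) ↔
      (∃ M N : ℕ, ∀ n : ℕ, N < n →
        ∃ S : Set (MvPolynomial (Inds k n) K), Ideal.span S = Qker f n ∧
          ∀ g ∈ S, (MvPolynomial.vars g).card ≤ M)) ∧
    (∀ M N : ℕ,
      (∀ n : ℕ, N < n →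
        ∃ S : Set (MvPolynomial (Inds k n) K), Ideal.span S = Qker f n ∧
          ∀ g ∈ S, (MvPolynomial.vars g).card ≤ M) →
      ∀ (n m : ℕ) (h : n ≤ m), max N (k * M) < n →
        LsymInds h ((Qker f n : Ideal (MvPolynomial (Inds k n) K)) :
          Set (MvPolynomial (Inds k n) K)) = Qker f m) := by
  have stabilizes : ∀ M N : ℕ, (∀ n : ℕ, N < n →
      ∃ S : Set (MvPolynomial (Inds k n) K), Ideal.span S = Qker f n ∧
        ∀ g ∈ S, (vars g).card ≤ M) →
      ∀ (n m : ℕ) (h : n ≤ m), max N (k * M) < n →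
        LsymInds h (Qker f n : Set _) = Qker f m := by
    intro M N hgen n m h hn
    obtain ⟨S, hS, hSvars⟩ := hgen m (by omega)
    exact LsymInds_Qker_eq_of_span_card_vars_le f h hS hSvars (by omega)
  refine ⟨⟨?_, fun ⟨M, N, hgen⟩ => ⟨_, stabilizes M N hgen⟩⟩, stabilizes⟩
  rintro ⟨N, hN⟩
  refine ⟨Fintype.card (Inds k (N + 1)), N, fun n hn => ?_⟩
  rw [← hN (N + 1) n hn (Nat.lt_succ_self N)]
  exact exists_span_eq_LsymInds_card_vars_le hn _

/-- For a field `K`, `k ≥ 1` and `f ∈ K[y_1,…,y_k]`, the chain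
`(Q_n)` of kernels induced by `f` stabilizes modulo the symmetric group (there is `N`
with `L_m(Q_n) = Q_m` for all `m ≥ n > N`) if and only if there are `M, N` such that
for all `n > N` the ideal `Q_n` has a generating set of polynomials of variable size
(number of distinct indeterminates occurring) at most `M`.  Moreover, in this case
stabilization occurs with bound `max(N, kM)`: `L_m(Q_n) = Q_m` for all
`m ≥ n > max(N, kM)`. -/
theorem stmt19 {K : Type*} [Field K] (k : ℕ) (hk : 1 ≤ k)
    (f : MvPolynomial (Fin k) K) :
    ((∃ N : ℕ, ∀ (n m : ℕ) (h : n ≤ m), N < n →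
        LsymInds h ((Qker f n : Ideal (MvPolynomial (Inds k n) K)) :
          Set (MvPolynomial (Inds k n) K)) = Qker f m) ↔
      (∃ M N : ℕ, ∀ n : ℕ, N < n →
        ∃ S : Set (MvPolynomial (Inds k n) K), Ideal.span S = Qker f n ∧
          ∀ g ∈ S, (MvPolynomial.vars g).card ≤ M)) ∧
    (∀ M N : ℕ,
      (∀ n : ℕ, N < n →
        ∃ S : Set (MvPolynomial (Inds k n) K), Ideal.span S = Qker f n ∧
          ∀ g ∈ S, (MvPolynomial.vars g).card ≤ M) →
      ∀ (n m : ℕ) (h : n ≤ m), max N (k * M) < n →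
        LsymInds h ((Qker f n : Ideal (MvPolynomial (Inds k n) K)) :
          Set (MvPolynomial (Inds k n) K)) = Qker f m) :=
  stmt19_general k f
end
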